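/- arXiv:math/0406488 — 8 statements merged into one kernel-verified Lean document; each statement's English description precedes it below -/
import Mathlib

section
/- If algebras 𝔄₁, 𝔄₂ are monotonically independent in a probability space (𝔄, φ) and x₁, x₂ are monotonically independent elements with x₁ ∈ 𝔄₁, x₂ ∈ 𝔄₂, then for every n ≥ 1 one has (x₁x₂)ⁿ = φ(x₂)^{n-1} x₁ⁿ x₂, and consequently φ((x₁x₂)ⁿ) = φ(x₂)ⁿ φ(x₁ⁿ). -/
/-- Muraki's monotonic independence of two (not necessarily unital) subalgebras
`A1, A2` of an algebraic probability space `(A, φ)`. -/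
def MonoIndep {A : Type*} [Ring A] [Algebra ℂ A] (φ : A →ₗ[ℂ] ℂ)
    (A1 A2 : NonUnitalSubalgebra ℂ A) : Prop :=
  (∀ x₁ ∈ A1, ∀ y₁ ∈ A1, ∀ x₂ ∈ A2, x₁ * x₂ * y₁ = φ x₂ • (x₁ * y₁)) ∧
  (∀ x₁ ∈ A1, ∀ x₂ ∈ A2, ∀ y₂ ∈ A2, φ (x₂ * x₁ * y₂) = φ x₂ * φ x₁ * φ y₂) ∧
  (∀ x₁ ∈ A1, ∀ x₂ ∈ A2, φ (x₂ * x₁) = φ x₂ * φ x₁) ∧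
  (∀ x₁ ∈ A1, ∀ y₂ ∈ A2, φ (x₁ * y₂) = φ x₁ * φ y₂)

private lemma pow_mem_aux {A : Type*} [Ring A] [Algebra ℂ A]
    (A1 : NonUnitalSubalgebra ℂ A) {x : A} (hx : x ∈ A1) :
    ∀ n : ℕ, 1 ≤ n → x ^ n ∈ A1 := by
  intro n hn
  induction n with
  | zero => omega
  | succ m ih =>
    rcases Nat.eq_or_lt_of_le hn with h | h
    · rw [← h, pow_one]; exact hx
    · rw [pow_succ]
      exact mul_mem (ih (by omega)) hx

theorem stmt0 {A : Type*} [Ring A] [Algebra ℂ A] (φ : A →ₗ[ℂ] ℂ) (hφ1 : φ 1 = 1)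
    (A1 A2 : NonUnitalSubalgebra ℂ A) (hind : MonoIndep φ A1 A2)
    (x₁ x₂ : A) (hx₁ : x₁ ∈ A1) (hx₂ : x₂ ∈ A2) (n : ℕ) (hn : 1 ≤ n) :
    (x₁ * x₂) ^ n = φ x₂ ^ (n - 1) • (x₁ ^ n * x₂) ∧
      φ ((x₁ * x₂) ^ n) = φ x₂ ^ n * φ (x₁ ^ n) := by
  obtain ⟨h1, h2, h3, h4⟩ := hind
  have key : ∀ m : ℕ, 1 ≤ m → (x₁ * x₂) ^ m = φ x₂ ^ (m - 1) • (x₁ ^ m * x₂) := by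
    intro m hm
    induction m with
    | zero => omega
    | succ k ih =>
      rcases Nat.eq_or_lt_of_le hm with h | h
      · simp [← h]
      · have hk : 1 ≤ k := by omega
        have hstep : x₁ ^ k * x₂ * x₁ = φ x₂ • (x₁ ^ k * x₁) :=
          h1 _ (pow_mem_aux A1 hx₁ k hk) _ hx₁ _ hx₂
        calc (x₁ * x₂) ^ (k + 1) = (x₁ * x₂) ^ k * (x₁ * x₂) := pow_succ _ _
          _ = (φ x₂ ^ (k - 1) • (x₁ ^ k * x₂)) * (x₁ * x₂) := by rw [ih hk]
          _ = φ x₂ ^ (k - 1) • (x₁ ^ k * x₂ * x₁ * x₂) := by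
              rw [smul_mul_assoc, ← mul_assoc]
          _ = φ x₂ ^ (k - 1) • ((φ x₂ • (x₁ ^ k * x₁)) * x₂) := by rw [hstep]
          _ = (φ x₂ ^ (k - 1) * φ x₂) • (x₁ ^ (k + 1) * x₂) := by
              rw [smul_mul_assoc, smul_smul, ← pow_succ, ← pow_succ]
          _ = φ x₂ ^ (k + 1 - 1) • (x₁ ^ (k + 1) * x₂) := by
              rw [← pow_succ, Nat.succ_sub_one, show k - 1 + 1 = k from by omega]
  refine ⟨key n hn, ?_⟩
  rw [key n hn, map_smul, h4 _ (pow_mem_aux A1 hx₁ n hn) _ hx₂,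
    show n = (n - 1) + 1 from by omega, Nat.succ_sub_one, pow_succ]
  simp only [smul_eq_mul]
  ring
end

section
/- Assume 𝔄₁, 𝔄₂ are monotonically independent in (𝔄, φ) and φ restricted to 𝔄₁ is a trace (φ(ab)=φ(ba) for a,b ∈ 𝔄₁). Then φ(xy) = φ(yx) for every x in the unital algebra generated by 𝔄₁ and every y in the unital algebra generated by 𝔄₁ ∪ 𝔄₂. -/
theorem stmt2 {A : Type*} [Ring A] [Algebra ℂ A] (φ : A →ₗ[ℂ] ℂ) (hφ1 : φ 1 = 1)
    (A1 A2 : NonUnitalSubalgebra ℂ A) (hind : MonoIndep φ A1 A2)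
    (htr : ∀ a ∈ A1, ∀ b ∈ A1, φ (a * b) = φ (b * a)) :
    ∀ x ∈ Algebra.adjoin ℂ (A1 : Set A),
      ∀ y ∈ Algebra.adjoin ℂ ((A1 : Set A) ∪ (A2 : Set A)),
        φ (x * y) = φ (y * x) := by
  obtain ⟨h1, h2, h3, h4⟩ := hind
  intro x hx y hy
  set Sx : Set A := {z | z = 1 ∨ z ∈ A1} with hSxdef
  set Sy : Set A := {z | ∃ p q r, (p = 1 ∨ p ∈ A2) ∧ (q = 1 ∨ q ∈ A1) ∧ (r = 1 ∨ r ∈ A2) ∧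
    z = p * q * r} with hSydef
  -- "optional A2" elements are closed under multiplication
  have hQ2mul : ∀ p r : A, (p = 1 ∨ p ∈ A2) → (r = 1 ∨ r ∈ A2) → (p * r = 1 ∨ p * r ∈ A2) := by
    rintro p r (rfl | hp) (rfl | hr)
    · left; simp
    · right; simpa using hr
    · right; simpa using hp
    · right; exact mul_mem hp hr
  have hmemSy : ∀ p q r : A, (p = 1 ∨ p ∈ A2) → (q = 1 ∨ q ∈ A1) → (r = 1 ∨ r ∈ A2) →
      p * q * r ∈ Submodule.span ℂ Sy := by
    intro p q r hp hq hr
    exact Submodule.subset_span ⟨p, q, r, hp, hq, hr, rfl⟩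
  -- products of generators of Sy stay in the span of Sy
  have genmul : ∀ z ∈ Sy, ∀ w ∈ Sy, z * w ∈ Submodule.span ℂ Sy := by
    rintro _ ⟨p, q, r, hp, hq, hr, rfl⟩ _ ⟨p', q', r', hp', hq', hr', rfl⟩
    rcases hQ2mul r p' hr hp' with hm | hm
    · -- middle collapses to 1
      have e : p * q * r * (p' * q' * r') = p * (q * q') * r' := by
        calc p * q * r * (p' * q' * r') = p * q * ((r * p') * (q' * r')) := by noncomm_ring
          _ = p * q * (q' * r') := by rw [hm, one_mul]
          _ = p * (q * q') * r' := by noncomm_ring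
      rw [e]
      have hqq : q * q' = 1 ∨ q * q' ∈ A1 := by
        rcases hq with rfl | hq <;> rcases hq' with rfl | hq'
        · left; simp
        · right; simpa using hq'
        · right; simpa using hq
        · right; exact mul_mem hq hq'
      exact hmemSy p (q * q') r' hp hqq hr'
    · -- middle element r*p' is in A2
      rcases hq with rfl | hq
      · have e : p * 1 * r * (p' * q' * r') = (p * (r * p')) * q' * r' := by noncomm_ring
        rw [e]
        exact hmemSy _ q' r' (hQ2mul p (r * p') hp (Or.inr hm)) hq' hr'
      · rcases hq' with rfl | hq'
        · have e : p * q * r * (p' * 1 * r') = p * q * ((r * p') * r') := by noncomm_ring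
          rw [e]
          exact hmemSy p q _ hp (Or.inr hq) (hQ2mul (r * p') r' (Or.inr hm) hr')
        · have key := h1 q hq q' hq' (r * p') hm
          have e : p * q * r * (p' * q' * r') = φ (r * p') • (p * (q * q') * r') := by
            calc p * q * r * (p' * q' * r') = p * (q * (r * p') * q') * r' := by noncomm_ring
              _ = p * (φ (r * p') • (q * q')) * r' := by rw [key]
              _ = φ (r * p') • (p * (q * q') * r') := by
                  rw [mul_smul_comm, smul_mul_assoc]
          rw [e]
          exact Submodule.smul_mem _ _ (hmemSy p (q * q') r' hp (Or.inr (mul_mem hq hq')) hr')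
  -- span of Sy is closed under multiplication
  have hclosedy : ∀ z ∈ Submodule.span ℂ Sy, ∀ w ∈ Submodule.span ℂ Sy,
      z * w ∈ Submodule.span ℂ Sy := by
    intro z hz w hw
    have hle : Submodule.span ℂ Sy * Submodule.span ℂ Sy ≤ Submodule.span ℂ Sy := by
      rw [Submodule.span_mul_span]
      refine Submodule.span_le.mpr ?_
      rintro _ ⟨z, hz, w, hw, rfl⟩
      exact genmul z hz w hw
    exact hle (Submodule.mul_mem_mul hz hw)
  -- y lies in the span of Sy
  have hy' : y ∈ Submodule.span ℂ Sy := by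
    induction hy using Algebra.adjoin_induction with
    | mem z hz =>
      rcases hz with hz | hz
      · exact Submodule.subset_span ⟨1, z, 1, Or.inl rfl, Or.inr hz, Or.inl rfl, by simp⟩
      · exact Submodule.subset_span ⟨z, 1, 1, Or.inr hz, Or.inl rfl, Or.inl rfl, by simp⟩
    | algebraMap r =>
      rw [Algebra.algebraMap_eq_smul_one]
      exact Submodule.smul_mem _ _
        (Submodule.subset_span ⟨1, 1, 1, Or.inl rfl, Or.inl rfl, Or.inl rfl, by simp⟩)
    | add a b _ _ iha ihb => exact Submodule.add_mem _ iha ihb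
    | mul a b _ _ iha ihb => exact hclosedy a iha b ihb
  -- x lies in the span of Sx
  have hx' : x ∈ Submodule.span ℂ Sx := by
    induction hx using Algebra.adjoin_induction with
    | mem z hz => exact Submodule.subset_span (Or.inr hz)
    | algebraMap r =>
      rw [Algebra.algebraMap_eq_smul_one]
      exact Submodule.smul_mem _ _ (Submodule.subset_span (Or.inl rfl))
    | add a b _ _ iha ihb => exact Submodule.add_mem _ iha ihb
    | mul a b ha hb iha ihb =>
      -- products of span-Sx elements are in span Sx
      have genmulx : ∀ z ∈ Sx, ∀ w ∈ Sx, z * w ∈ Sx := by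
        rintro z (rfl | hz) w (rfl | hw)
        · left; simp
        · right; simpa using hw
        · right; simpa using hz
        · right; exact mul_mem hz hw
      have hle : Submodule.span ℂ Sx * Submodule.span ℂ Sx ≤ Submodule.span ℂ Sx := by
        rw [Submodule.span_mul_span]
        refine Submodule.span_le.mpr ?_
        rintro _ ⟨z, hz, w, hw, rfl⟩
        exact Submodule.subset_span (genmulx z hz w hw)
      exact hle (Submodule.mul_mem_mul iha ihb)
  -- the core computation on generators
  have core : ∀ x' ∈ Sx, ∀ y' ∈ Sy, φ (x' * y') = φ (y' * x') := by
    rintro x' (rfl | hx1) y' hy'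
    · simp
    · obtain ⟨p, q, r, hp, hq, hr, rfl⟩ := hy'
      rcases hp with rfl | hp <;> rcases hq with rfl | hq <;> rcases hr with rfl | hr
      · simp
      · -- (1,1,r)
        rw [show x' * (1 * 1 * r) = x' * r from by noncomm_ring,
          show 1 * 1 * r * x' = r * x' from by noncomm_ring,
          h4 x' hx1 r hr, h3 x' hx1 r hr]
        ring
      · -- (1,q,1)
        rw [show x' * (1 * q * 1) = x' * q from by noncomm_ring,
          show 1 * q * 1 * x' = q * x' from by noncomm_ring]
        exact htr x' hx1 q hq
      · -- (1,q,r)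
        rw [show x' * (1 * q * r) = x' * q * r from by noncomm_ring,
          show 1 * q * r * x' = q * r * x' from by noncomm_ring,
          h1 q hq x' hx1 r hr, map_smul, smul_eq_mul,
          h4 (x' * q) (mul_mem hx1 hq) r hr, htr x' hx1 q hq]
        ring
      · -- (p,1,1)
        rw [show x' * (p * 1 * 1) = x' * p from by noncomm_ring,
          show p * 1 * 1 * x' = p * x' from by noncomm_ring,
          h4 x' hx1 p hp, h3 x' hx1 p hp]
        ring
      · -- (p,1,r)
        rw [show x' * (p * 1 * r) = x' * (p * r) from by noncomm_ring,
          show p * 1 * r * x' = p * r * x' from by noncomm_ring,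
          h4 x' hx1 (p * r) (mul_mem hp hr), h3 x' hx1 (p * r) (mul_mem hp hr)]
        ring
      · -- (p,q,1)
        rw [show x' * (p * q * 1) = x' * p * q from by noncomm_ring,
          show p * q * 1 * x' = p * (q * x') from by noncomm_ring,
          h1 x' hx1 q hq p hp, map_smul, smul_eq_mul,
          h3 (q * x') (mul_mem hq hx1) p hp, htr x' hx1 q hq]
      · -- (p,q,r)
        rw [show x' * (p * q * r) = x' * p * q * r from by noncomm_ring,
          h1 x' hx1 q hq p hp, smul_mul_assoc, map_smul, smul_eq_mul,
          h4 (x' * q) (mul_mem hx1 hq) r hr,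
          show p * q * r * x' = p * (q * r * x') from by noncomm_ring,
          h1 q hq x' hx1 r hr, mul_smul_comm, map_smul, smul_eq_mul,
          h3 (q * x') (mul_mem hq hx1) p hp, htr x' hx1 q hq]
        ring
  -- extend linearly in x
  have step1 : ∀ x', x' ∈ Submodule.span ℂ Sx → ∀ y' ∈ Sy, φ (x' * y') = φ (y' * x') := by
    intro x' hx'
    induction hx' using Submodule.span_induction with
    | mem z hz => exact core z hz
    | zero => intro y' _; simp
    | add a b ha hb iha ihb =>
      intro y' hy'
      rw [add_mul, mul_add, map_add, map_add, iha y' hy', ihb y' hy']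
    | smul c a ha iha =>
      intro y' hy'
      rw [smul_mul_assoc, mul_smul_comm, map_smul, map_smul, iha y' hy']
  -- extend linearly in y
  clear hy
  induction hy' using Submodule.span_induction with
  | mem z hz => exact step1 x hx' z hz
  | zero => simp
  | add a b ha hb iha ihb => rw [mul_add, add_mul, map_add, map_add, iha, ihb]
  | smul c a ha iha => rw [mul_smul_comm, smul_mul_assoc, map_smul, map_smul, iha]
end

section
/- Let x₁, x₂ be random variables in (𝔄, φ) and c₁, c₂ ∈ ℂ such that x₁ − c₁·1 and x₂ − c₂·1 generate monotonically independent subalgebras. Then for every n ≥ 0, φ((x₁²x₂)ⁿ) = φ((x₁x₂x₁)ⁿ) = φ((x₂x₁²)ⁿ); i.e., the variables x₁²x₂, x₁x₂x₁, and x₂x₁² have the same distribution. -/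
private lemma key_pow {A : Type*} [Ring A] (u v : A) (n : ℕ) :
    u * (v * u) ^ n = (u * v) ^ n * u := by
  induction n with
  | zero => simp
  | succ n ih =>
    rw [pow_succ, pow_succ, ← mul_assoc, ih]
    simp only [mul_assoc]

theorem stmt3 {A : Type*} [Ring A] [Algebra ℂ A] (φ : A →ₗ[ℂ] ℂ) (hφ1 : φ 1 = 1)
    (x₁ x₂ : A) (c₁ c₂ : ℂ)
    (hind : MonoIndep φ (NonUnitalAlgebra.adjoin ℂ {x₁ - algebraMap ℂ A c₁})
      (NonUnitalAlgebra.adjoin ℂ {x₂ - algebraMap ℂ A c₂})) :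
    ∀ n : ℕ, φ ((x₁ ^ 2 * x₂) ^ n) = φ ((x₁ * x₂ * x₁) ^ n) ∧
      φ ((x₁ * x₂ * x₁) ^ n) = φ ((x₂ * x₁ ^ 2) ^ n) := by
  obtain ⟨h1, h2, h3, h4⟩ := hind
  set a : A := x₁ - algebraMap ℂ A c₁ with ha
  set b : A := x₂ - algebraMap ℂ A c₂ with hb
  set A1 : NonUnitalSubalgebra ℂ A := NonUnitalAlgebra.adjoin ℂ {a} with hA1
  set A2 : NonUnitalSubalgebra ℂ A := NonUnitalAlgebra.adjoin ℂ {b} with hA2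
  -- A1 is commutative
  have hcomm0 : ∀ p ∈ A1, Commute a p := by
    intro p hp
    induction hp using NonUnitalAlgebra.adjoin_induction with
    | mem x hx => rw [Set.mem_singleton_iff] at hx; subst hx; exact Commute.refl a
    | add x y hx hy ihx ihy => exact ihx.add_right ihy
    | zero => exact Commute.zero_right a
    | mul x y hx hy ihx ihy => exact ihx.mul_right ihy
    | smul r x hx ihx => exact ihx.smul_right r
  have hcomm : ∀ p ∈ A1, ∀ q ∈ A1, p * q = q * p := by
    intro p hp q hq
    induction hp using NonUnitalAlgebra.adjoin_induction with
    | mem x hx => rw [Set.mem_singleton_iff] at hx; subst hx; exact hcomm0 q hq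
    | add x y hx hy ihx ihy => exact (Commute.add_left ihx ihy :)
    | zero => exact Commute.zero_left q
    | mul x y hx hy ihx ihy => exact (Commute.mul_left ihx ihy :)
    | smul r x hx ihx => exact (Commute.smul_left ihx r :)
  -- The set of "reduced words"
  set T : Set A := {z | ∃ β ∈ insert (1 : A) (A2 : Set A), ∃ p ∈ insert (1 : A) (A1 : Set A),
      ∃ β' ∈ insert (1 : A) (A2 : Set A), z = β * p * β'} with hT
  set S : Submodule ℂ A := Submodule.span ℂ T with hS
  have hTsub : T ⊆ S := Submodule.subset_span
  have h1T : (1 : A) ∈ T := ⟨1, Set.mem_insert _ _, 1, Set.mem_insert _ _, 1, Set.mem_insert _ _,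
    by simp⟩
  have haT : a ∈ T := ⟨1, Set.mem_insert _ _, a,
    Set.mem_insert_of_mem _ (NonUnitalAlgebra.self_mem_adjoin_singleton ℂ a), 1,
    Set.mem_insert _ _, by simp⟩
  have hbT : b ∈ T := ⟨b, Set.mem_insert_of_mem _ (NonUnitalAlgebra.self_mem_adjoin_singleton ℂ b),
    1, Set.mem_insert _ _, 1, Set.mem_insert _ _, by simp⟩
  -- products of elements of `insert 1 A2` stay there
  have hA2mul : ∀ β ∈ insert (1 : A) (A2 : Set A), ∀ γ ∈ insert (1 : A) (A2 : Set A),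
      β * γ ∈ insert (1 : A) (A2 : Set A) := by
    rintro β (rfl | hβ) γ (rfl | hγ)
    · simp
    · simpa using Set.mem_insert_of_mem _ hγ
    · simpa using Set.mem_insert_of_mem _ hβ
    · exact Set.mem_insert_of_mem _ (mul_mem hβ hγ)
  -- T is (essentially) multiplicatively closed
  have hT_mul : ∀ s ∈ T, ∀ t ∈ T, s * t ∈ S := by
    rintro s ⟨β, hβ, p, hp, β', hβ', rfl⟩ t ⟨γ, hγ, q, hq, γ', hγ', rfl⟩
    rcases hp with rfl | hp
    · -- p = 1 : regroup as (β*β'*γ) * q * γ'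
      have hm : β * β' * γ ∈ insert (1 : A) (A2 : Set A) := hA2mul _ (hA2mul _ hβ _ hβ') _ hγ
      have : β * 1 * β' * (γ * q * γ') = (β * β' * γ) * q * γ' := by
        simp only [mul_one, mul_assoc]
      rw [this]
      exact hTsub ⟨_, hm, q, hq, γ', hγ', rfl⟩
    rcases hq with rfl | hq
    · -- q = 1 : regroup as β * p * (β'*γ*γ')
      have hm : β' * γ * γ' ∈ insert (1 : A) (A2 : Set A) := hA2mul _ (hA2mul _ hβ' _ hγ) _ hγ'
      have : β * p * β' * (γ * 1 * γ') = β * p * (β' * γ * γ') := by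
        simp only [mul_one, mul_assoc]
      rw [this]
      exact hTsub ⟨β, hβ, p, Set.mem_insert_of_mem _ hp, _, hm, by simp only [mul_assoc]⟩
    -- now p, q ∈ A1
    rcases hβ' with rfl | hβ'
    · rcases hγ with rfl | hγ
      · -- no middle A2 part
        have : β * p * 1 * (1 * q * γ') = β * (p * q) * γ' := by
          simp only [mul_one, one_mul, mul_assoc]
        rw [this]
        exact hTsub ⟨β, hβ, p * q, Set.mem_insert_of_mem _ (mul_mem hp hq), γ', hγ', rfl⟩
      · -- middle part γ ∈ A2 collapses
        have hcol := h1 p hp q hq γ hγ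
        have : β * p * 1 * (γ * q * γ') = β * (p * γ * q) * γ' := by
          simp only [mul_one, mul_assoc]
        rw [this, hcol, mul_smul_comm, smul_mul_assoc]
        exact Submodule.smul_mem _ _
          (hTsub ⟨β, hβ, p * q, Set.mem_insert_of_mem _ (mul_mem hp hq), γ', hγ', rfl⟩)
    · rcases hγ with rfl | hγ
      · have hcol := h1 p hp q hq β' hβ'
        have : β * p * β' * (1 * q * γ') = β * (p * β' * q) * γ' := by
          simp only [one_mul, mul_assoc]
        rw [this, hcol, mul_smul_comm, smul_mul_assoc]
        exact Submodule.smul_mem _ _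
          (hTsub ⟨β, hβ, p * q, Set.mem_insert_of_mem _ (mul_mem hp hq), γ', hγ', rfl⟩)
      · have hcol := h1 p hp q hq (β' * γ) (mul_mem hβ' hγ)
        have : β * p * β' * (γ * q * γ') = β * (p * (β' * γ) * q) * γ' := by
          simp only [mul_assoc]
        rw [this, hcol, mul_smul_comm, smul_mul_assoc]
        exact Submodule.smul_mem _ _
          (hTsub ⟨β, hβ, p * q, Set.mem_insert_of_mem _ (mul_mem hp hq), γ', hγ', rfl⟩)
  -- S is multiplicatively closed
  have hTS_mul : ∀ s ∈ T, ∀ z ∈ S, s * z ∈ S := by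
    intro s hs z hz
    induction hz using Submodule.span_induction with
    | mem w hw => exact hT_mul s hs w hw
    | zero => rw [mul_zero]; exact zero_mem S
    | add x y hx hy ihx ihy => rw [mul_add]; exact add_mem ihx ihy
    | smul c x hx ihx => rw [mul_smul_comm]; exact Submodule.smul_mem _ _ ihx
  have hS_mul : ∀ z ∈ S, ∀ w ∈ S, z * w ∈ S := by
    intro z hz
    induction hz using Submodule.span_induction with
    | mem s hs => exact fun w hw => hTS_mul s hs w hw
    | zero => intro w hw; rw [zero_mul]; exact zero_mem S
    | add x y hx hy ihx ihy => intro w hw; rw [add_mul]; exact add_mem (ihx w hw) (ihy w hw)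
    | smul c x hx ihx => intro w hw; rw [smul_mul_assoc]; exact Submodule.smul_mem _ _ (ihx w hw)
  have hx1S : x₁ ∈ S := by
    have : x₁ = a + c₁ • (1 : A) := by
      rw [ha, Algebra.algebraMap_eq_smul_one]; abel
    rw [this]
    exact add_mem (hTsub haT) (Submodule.smul_mem _ _ (hTsub h1T))
  have hx2S : x₂ ∈ S := by
    have : x₂ = b + c₂ • (1 : A) := by
      rw [hb, Algebra.algebraMap_eq_smul_one]; abel
    rw [this]
    exact add_mem (hTsub hbT) (Submodule.smul_mem _ _ (hTsub h1T))
  have hSpow : ∀ z ∈ S, ∀ n : ℕ, z ^ (n + 1) ∈ S := by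
    intro z hz n
    induction n with
    | zero => simpa using hz
    | succ n ih => rw [pow_succ]; exact hS_mul _ ih _ hz
  -- the trace property on T
  have hswap : ∀ p ∈ A1, ∀ q ∈ A1, φ (q * p) = φ (p * q) := by
    intro p hp q hq; rw [hcomm q hq p hp]
  have htrT : ∀ q ∈ A1, ∀ t ∈ T, φ (q * t) = φ (t * q) := by
    rintro q hq t ⟨β, hβ, p, hp, β', hβ', rfl⟩
    rcases hβ with rfl | hβ
    · rcases hp with rfl | hp
      · rcases hβ' with rfl | hβ'
        · simp
        · simp only [one_mul]
          rw [h4 q hq β' hβ', h3 q hq β' hβ']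
          ring
      · rcases hβ' with rfl | hβ'
        · simp only [one_mul, mul_one]
          exact hswap p hp q hq
        · simp only [one_mul]
          have hL : q * (p * β') = q * p * β' := by rw [mul_assoc]
          have hR : p * β' * q = φ β' • (p * q) := h1 p hp q hq β' hβ'
          rw [hL, hR, h4 (q * p) (mul_mem hq hp) β' hβ', map_smul, smul_eq_mul,
            hswap p hp q hq]
          ring
    · rcases hp with rfl | hp
      · rcases hβ' with rfl | hβ'
        · simp only [mul_one]
          rw [h4 q hq β hβ, h3 q hq β hβ]
          ring
        · simp only [mul_one]
          rw [h4 q hq (β * β') (mul_mem hβ hβ'), h3 q hq (β * β') (mul_mem hβ hβ')]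
          ring
      · rcases hβ' with rfl | hβ'
        · simp only [mul_one]
          have hL : q * (β * p) = q * β * p := by rw [mul_assoc]
          rw [hL, h1 q hq p hp β hβ, map_smul, smul_eq_mul, mul_assoc,
            h3 (p * q) (mul_mem hp hq) β hβ, hswap p hp q hq]
        · have hL : q * (β * p * β') = (q * β * p) * β' := by simp only [mul_assoc]
          rw [hL, h1 q hq p hp β hβ, smul_mul_assoc, map_smul, smul_eq_mul,
            h4 (q * p) (mul_mem hq hp) β' hβ']
          have hR : β * p * β' * q = β * (p * β' * q) := by simp only [mul_assoc]
          rw [hR, h1 p hp q hq β' hβ', mul_smul_comm, map_smul, smul_eq_mul,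
            h3 (p * q) (mul_mem hp hq) β hβ, hswap p hp q hq]
          ring
  -- the trace property: for z ∈ S, φ (x₁ z) = φ (z x₁)
  have htrS : ∀ z ∈ S, φ (a * z) = φ (z * a) := by
    intro z hz
    have haA1 : a ∈ A1 := NonUnitalAlgebra.self_mem_adjoin_singleton ℂ a
    induction hz using Submodule.span_induction with
    | mem t ht => exact htrT a haA1 t ht
    | zero => simp
    | add x y hx hy ihx ihy => rw [mul_add, add_mul, map_add, map_add, ihx, ihy]
    | smul c x hx ihx => rw [mul_smul_comm, smul_mul_assoc, map_smul, map_smul, ihx]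
  have htr : ∀ z ∈ S, φ (x₁ * z) = φ (z * x₁) := by
    intro z hz
    have h1 : x₁ = a + algebraMap ℂ A c₁ := by rw [ha]; abel
    rw [h1, add_mul, mul_add, map_add, map_add, htrS z hz, Algebra.commutes]
  -- now the main computation
  intro n
  cases n with
  | zero => simp
  | succ n =>
    have hpowS : (x₁ ^ 2 * x₂) ^ n ∈ S ∨ n = 0 := by
      cases n with
      | zero => exact Or.inr rfl
      | succ m => exact Or.inl (hSpow _ (hS_mul _ (hSpow _ hx1S 1) _ hx2S) m)
    have hmidS : (x₁ ^ 2 * x₂) ^ n ∈ S ∨ (x₁ ^ 2 * x₂) ^ n = 1 := by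
      rcases hpowS with h | h
      · exact Or.inl h
      · rw [h, pow_zero]; exact Or.inr rfl
    -- W = x₁ * x₂ * (x₁^2*x₂)^n
    have hWS : x₁ * x₂ * (x₁ ^ 2 * x₂) ^ n ∈ S := by
      rcases hmidS with h | h
      · exact hS_mul _ (hS_mul _ hx1S _ hx2S) _ h
      · rw [h, mul_one]; exact hS_mul _ hx1S _ hx2S
    have hVS : x₂ * (x₁ ^ 2 * x₂) ^ n * x₁ ∈ S := by
      rcases hmidS with h | h
      · exact hS_mul _ (hS_mul _ hx2S _ h) _ hx1S
      · rw [h, mul_one]; exact hS_mul _ hx2S _ hx1S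
    have pw1a : x₁ * (x₁ * x₂ * (x₁ ^ 2 * x₂) ^ n) = (x₁ ^ 2 * x₂) ^ (n + 1) := by
      rw [pow_succ' (x₁ ^ 2 * x₂) n]
      simp only [pow_two, mul_assoc]
    have pw1b : (x₁ * x₂ * (x₁ ^ 2 * x₂) ^ n) * x₁ = (x₁ * x₂ * x₁) ^ (n + 1) := by
      have := key_pow x₁ (x₁ * x₂) n
      calc (x₁ * x₂ * (x₁ ^ 2 * x₂) ^ n) * x₁
          = x₁ * x₂ * ((x₁ * (x₁ * x₂)) ^ n * x₁) := by simp only [pow_two, mul_assoc]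
        _ = x₁ * x₂ * (x₁ * (x₁ * x₂ * x₁) ^ n) := by rw [← this]
        _ = (x₁ * x₂ * x₁) ^ (n + 1) := by rw [pow_succ' (x₁ * x₂ * x₁) n]; simp only [mul_assoc]
    have pw2a : x₁ * (x₂ * (x₁ ^ 2 * x₂) ^ n * x₁) = (x₁ * x₂ * x₁) ^ (n + 1) := by
      rw [← pw1b]; simp only [mul_assoc]
    have pw2b : (x₂ * (x₁ ^ 2 * x₂) ^ n * x₁) * x₁ = (x₂ * x₁ ^ 2) ^ (n + 1) := by
      have := key_pow (x₁ ^ 2) x₂ n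
      calc (x₂ * (x₁ ^ 2 * x₂) ^ n * x₁) * x₁
          = x₂ * ((x₁ ^ 2 * x₂) ^ n * x₁ ^ 2) := by simp only [pow_two, mul_assoc]
        _ = x₂ * (x₁ ^ 2 * (x₂ * x₁ ^ 2) ^ n) := by rw [this]
        _ = (x₂ * x₁ ^ 2) ^ (n + 1) := by rw [pow_succ' (x₂ * x₁ ^ 2) n]; simp only [mul_assoc]
    constructor
    · rw [← pw1a, ← pw1b, htr _ hWS]
    · rw [← pw2a, ← pw2b, htr _ hVS]
end

section
/- Let s be the unilateral shift on ℓ²(ℕ) with standard basis (ξⱼ)_{j≥0} (sξⱼ = ξ_{j+1}), and let u be a polynomial with u(0) ≠ 0. Set x = (1+s)u(s*) and ψ_x(z) = Σ_{n≥1} ⟨xⁿξ₀, ξ₀⟩ zⁿ (a convergent power series near 0). Then ψ_x(z/((1+z)u(z))) = z for all sufficiently small |z|. -/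
open scoped InnerProductSpace
open Topology

/-!
For `‖z‖ < 1` the vector `v_z = ∑ zʲ ξⱼ` is an eigenvector of `s*` with eigenvalue `z` and satisfies
`(1 - z s) v_z = ξ₀`. Hence `x v_z = u(z) (1 + s) v_z`, and for `w = z / ((1 + z) u(z))` one gets
`(1 - w x) ((1 + z) v_z) = ξ₀`. For small `z` the Neumann series of `w x` converges, so
`∑_{n ≥ 0} ⟨ξ₀, (w x)ⁿ ξ₀⟩ = ⟨ξ₀, (1 + z) v_z⟩ = 1 + z`, and dropping the term `n = 0` leaves `z`.
-/

namespace ContinuousLinearMap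

section Eigenvector

variable {R M : Type*} [CommRing R] [AddCommGroup M] [TopologicalSpace M]
  [IsTopologicalAddGroup M] [Module R M]

theorem pow_apply_of_apply_eq_smul {T : M →L[R] M} {v : M} {μ : R} (h : T v = μ • v) (n : ℕ) :
    (T ^ n) v = μ ^ n • v := by
  induction n with
  | zero => simp
  | succ n ih => rw [pow_succ, mul_apply_eq_comp, h, map_smul, ih, smul_smul, pow_succ, mul_comm]

theorem aeval_apply_of_apply_eq_smul [ContinuousConstSMul R M] {T : M →L[R] M} {v : M} {μ : R}
    (h : T v = μ • v) (p : Polynomial R) : Polynomial.aeval T p v = p.eval μ • v := by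
  induction p using Polynomial.induction_on' with
  | add p q hp hq => simp [hp, hq, add_smul]
  | monomial n a =>
    simp [Polynomial.aeval_monomial, pow_apply_of_apply_eq_smul h n,
      Algebra.algebraMap_eq_smul_one, smul_smul]

end Eigenvector

theorem hasSum_pow_succ_apply {𝕜 E : Type*} [NontriviallyNormedField 𝕜] [NormedAddCommGroup E]
    [NormedSpace 𝕜 E] [CompleteSpace E] {T : E →L[𝕜] E} (hT : ‖T‖ < 1) {a b : E}
    (h : (1 - T) b = a) : HasSum (fun n => (T ^ (n + 1)) a) (b - a) := by
  have hinv : (∑' n, T ^ n) a = b := by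
    rw [← h, ← mul_apply_eq_comp, geom_series_mul_neg T hT, one_apply_eq_self]
  have hgeom : HasSum (fun n => (T ^ n) a) b :=
    hinv ▸ (summable_geometric_of_norm_lt_one hT).hasSum.mapL (apply 𝕜 E a)
  simpa using (hasSum_nat_add_iff' 1).mpr hgeom

end ContinuousLinearMap

namespace HilbertBasis

variable {𝕜 H : Type*} [RCLike 𝕜] [NormedAddCommGroup H] [InnerProductSpace 𝕜 H]

theorem ext_inner {ι : Type*} (ξ : HilbertBasis ι 𝕜 H) {a b : H}
    (h : ∀ i, ⟪ξ i, a⟫_𝕜 = ⟪ξ i, b⟫_𝕜) : a = b :=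
  ξ.repr.injective <| lp.ext <| funext fun i => by rw [ξ.repr_apply_apply, ξ.repr_apply_apply, h]

variable [CompleteSpace H] (ξ : HilbertBasis ℕ 𝕜 H) {z : 𝕜}

noncomputable def geomVector (z : 𝕜) : H := ∑' j, z ^ j • ξ j

theorem hasSum_geomVector (hz : ‖z‖ < 1) : HasSum (fun j => z ^ j • ξ j) (ξ.geomVector z) := by
  refine Summable.hasSum (.of_norm ?_)
  simpa [norm_smul, ξ.orthonormal.1] using summable_geometric_of_lt_one (norm_nonneg z) hz

theorem inner_geomVector (hz : ‖z‖ < 1) (i : ℕ) : ⟪ξ i, ξ.geomVector z⟫_𝕜 = z ^ i := by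
  refine ((ξ.hasSum_geomVector hz).mapL (innerSL 𝕜 (ξ i))).unique ?_
  convert hasSum_ite_eq i (z ^ i) using 2 with j
  rcases eq_or_ne i j with rfl | hij
  · simp [ξ.orthonormal.1]
  · simp [orthonormal_iff_ite.mp ξ.orthonormal, hij, hij.symm]

variable {ξ} {s : H →L[𝕜] H}

theorem smul_shift_geomVector (hs : ∀ j, s (ξ j) = ξ (j + 1)) (hz : ‖z‖ < 1) :
    z • s (ξ.geomVector z) = ξ.geomVector z - ξ 0 := by
  have hv := ξ.hasSum_geomVector hz
  refine ((hv.mapL s).const_smul z).unique ?_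
  convert (hasSum_nat_add_iff' 1).mpr hv using 2 with j
  · simp [hs, smul_smul, pow_succ, mul_comm]
  · simp

theorem adjoint_geomVector (hs : ∀ j, s (ξ j) = ξ (j + 1)) (hz : ‖z‖ < 1) :
    s.adjoint (ξ.geomVector z) = z • ξ.geomVector z :=
  ξ.ext_inner fun i => by
    rw [ContinuousLinearMap.adjoint_inner_right, hs, inner_geomVector _ hz, inner_smul_right,
      inner_geomVector _ hz, pow_succ, mul_comm]

end HilbertBasis

section Haagerup

variable {𝕜 H : Type*} [RCLike 𝕜] [NormedAddCommGroup H] [InnerProductSpace 𝕜 H] [CompleteSpace H]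
  {ξ : HilbertBasis ℕ 𝕜 H} {s : H →L[𝕜] H} {u : Polynomial 𝕜} {z w : 𝕜}

theorem one_sub_smul_apply_smul_geomVector (hs : ∀ j, s (ξ j) = ξ (j + 1)) (hz : ‖z‖ < 1)
    (hw : w * ((1 + z) * u.eval z) = z) :
    (1 - w • ((1 + s) * Polynomial.aeval s.adjoint u)) ((1 + z) • ξ.geomVector z) = ξ 0 := by
  have hx : ((1 + s) * Polynomial.aeval s.adjoint u) (ξ.geomVector z) =
      u.eval z • (ξ.geomVector z + s (ξ.geomVector z)) := by
    rw [mul_apply_eq_comp, ContinuousLinearMap.aeval_apply_of_apply_eq_smul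
      (HilbertBasis.adjoint_geomVector hs hz), map_smul, add_apply, one_apply_eq_self]
  rw [sub_apply, one_apply_eq_self, smul_apply, map_smul, hx, smul_smul, smul_smul, mul_assoc, hw,
    smul_add, HilbertBasis.smul_shift_geomVector hs hz, add_smul, one_smul]
  abel

theorem tsum_inner_pow_succ_mul_pow_succ (hs : ∀ j, s (ξ j) = ξ (j + 1)) (hz : ‖z‖ < 1)
    (hw : w * ((1 + z) * u.eval z) = z) {x : H →L[𝕜] H}
    (hx : x = (1 + s) * Polynomial.aeval s.adjoint u) (hwx : ‖w • x‖ < 1) :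
    ∑' n : ℕ, ⟪ξ 0, (x ^ (n + 1)) (ξ 0)⟫_𝕜 * w ^ (n + 1) = z := by
  subst hx
  have := (ContinuousLinearMap.hasSum_pow_succ_apply hwx
    (one_sub_smul_apply_smul_geomVector hs hz hw)).mapL (innerSL 𝕜 (ξ 0))
  convert this.tsum_eq using 2 with n
  · simp [smul_pow, mul_comm]
  · simp [inner_sub_right, inner_smul_right, HilbertBasis.inner_geomVector _ hz, ξ.orthonormal.1]

end Haagerup

/-- Haagerup's lemma: for the unilateral shift `s` (given by a Hilbert basis
`ξ` of `H` with `s ξⱼ = ξ_{j+1}`) and a polynomial `u` with `u 0 ≠ 0`, the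
moment generating series `ψ_x(z) = ∑_{n ≥ 1} ⟨ξ₀, xⁿ ξ₀⟩ zⁿ` of
`x = (1+s) u(s*)` satisfies `ψ_x(z/((1+z)u(z))) = z` for small `z`. -/
theorem stmt4 {H : Type*} [NormedAddCommGroup H] [InnerProductSpace ℂ H]
    [CompleteSpace H] (ξ : HilbertBasis ℕ ℂ H) (s : H →L[ℂ] H)
    (hs : ∀ j : ℕ, s (ξ j) = ξ (j + 1))
    (u : Polynomial ℂ) (hu : Polynomial.eval 0 u ≠ 0)
    (x : H →L[ℂ] H)
    (hx : x = (1 + s) * Polynomial.aeval (ContinuousLinearMap.adjoint s) u) :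
    ∃ ε > 0, ∀ z : ℂ, ‖z‖ < ε →
      (∑' n : ℕ, ⟪ξ 0, (x ^ (n + 1)) (ξ 0)⟫_ℂ *
          (z / ((1 + z) * Polynomial.eval z u)) ^ (n + 1)) = z := by
  have hden : ContinuousAt (fun z : ℂ => (1 + z) * u.eval z) 0 :=
    ((continuous_const.add continuous_id).mul u.continuous).continuousAt
  have hw_cont : ContinuousAt (fun z : ℂ => z / ((1 + z) * u.eval z)) 0 :=
    continuousAt_id.div hden (by simpa using hu)
  have hsmall : ∀ᶠ z : ℂ in 𝓝 0, ‖z‖ < 1 ∧ (1 + z) * u.eval z ≠ 0 ∧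
      ‖(z / ((1 + z) * u.eval z)) • x‖ < 1 :=
    (continuousAt_id.norm.eventually_lt continuousAt_const (by simp)).and <|
      (hden.eventually_ne (by simpa using hu)).and <|
      (hw_cont.smul continuousAt_const).norm.eventually_lt continuousAt_const (by simp)
  obtain ⟨ε, hε, hε_small⟩ := Metric.eventually_nhds_iff.mp hsmall
  refine ⟨ε, hε, fun z hz => ?_⟩
  obtain ⟨hz1, hden_ne, hwx⟩ := hε_small (by simpa using hz)
  exact tsum_inner_pow_succ_mul_pow_succ hs hz1 (div_mul_cancel₀ z hden_ne) hx hwx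
end

section
/- For a probability measure μ on the unit circle 𝕋, define ψ_μ(z) = ∫_𝕋 zζ/(1−zζ) dμ(ζ) and η_μ(z) = ψ_μ(z)/(1+ψ_μ(z)) for z in the open unit disk 𝔻. Then η_μ is analytic on 𝔻 and satisfies |η_μ(z)| ≤ |z| for all z ∈ 𝔻. -/
/-!
Since `|1 - zζ| ≥ 1 - |z|` on the support of `μ`, the integrand of `ψ_μ` and its `z`-derivative are
bounded locally uniformly in `z`, so `ψ_μ` is holomorphic on the disk. For `|w| ≤ 1` one has
`1 + 2 Re (w / (1 - w)) = Re ((1 + w) / (1 - w)) = (1 - |w|²) / |1 - w|² ≥ 0`, hence integrating against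
the probability measure `μ` gives `Re ψ_μ ≥ -1/2`. This is exactly `|ψ_μ| ≤ |1 + ψ_μ|`, so
`1 + ψ_μ ≠ 0` and `η_μ` maps the disk into the closed disk with `η_μ(0) = 0`; Schwarz's lemma
finishes the proof.
-/

open MeasureTheory Complex Metric

noncomputable def psiTransform (μ : Measure ℂ) (z : ℂ) : ℂ :=
  ∫ ζ, z * ζ / (1 - z * ζ) ∂μ

lemma one_sub_norm_le_norm_one_sub_mul {z ζ : ℂ} (hζ : ‖ζ‖ ≤ 1) : 1 - ‖z‖ ≤ ‖1 - z * ζ‖ :=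
  calc 1 - ‖z‖ ≤ ‖(1 : ℂ)‖ - ‖z * ζ‖ := by
        rw [norm_one, norm_mul]
        gcongr
        exact mul_le_of_le_one_right (norm_nonneg z) hζ
    _ ≤ ‖1 - z * ζ‖ := norm_sub_norm_le _ _

lemma norm_mul_div_one_sub_mul_le {z ζ : ℂ} (hz : ‖z‖ < 1) (hζ : ‖ζ‖ ≤ 1) :
    ‖z * ζ / (1 - z * ζ)‖ ≤ ‖z‖ / (1 - ‖z‖) := by
  rw [norm_div, norm_mul]
  exact div_le_div₀ (norm_nonneg z) (mul_le_of_le_one_right (norm_nonneg z) hζ) (by linarith)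
    (one_sub_norm_le_norm_one_sub_mul hζ)

lemma norm_div_one_sub_mul_sq_le {z ζ : ℂ} {r : ℝ} (hz : ‖z‖ ≤ r) (hr : r < 1) (hζ : ‖ζ‖ ≤ 1) :
    ‖ζ / (1 - z * ζ) ^ 2‖ ≤ 1 / (1 - r) ^ 2 := by
  have hden : 1 - r ≤ ‖1 - z * ζ‖ := (one_sub_norm_le_norm_one_sub_mul hζ).trans' (by linarith)
  rw [norm_div, norm_pow]
  exact div_le_div₀ zero_le_one hζ (by nlinarith) (by gcongr)

lemma hasDerivAt_mul_div_one_sub_mul {z ζ : ℂ} (h : 1 - z * ζ ≠ 0) :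
    HasDerivAt (fun w => w * ζ / (1 - w * ζ)) (ζ / (1 - z * ζ) ^ 2) z := by
  have hnum : HasDerivAt (fun w : ℂ => w * ζ) ζ z := hasDerivAt_mul_const ζ
  exact (hnum.fun_div (hnum.const_sub 1) h).congr_deriv (by ring)

lemma neg_half_le_re_div_one_sub {w : ℂ} (hw : ‖w‖ ≤ 1) : -(1 / 2) ≤ (w / (1 - w)).re := by
  rcases eq_or_ne w 1 with rfl | hw1
  · norm_num
  have hN : 0 < normSq (1 - w) := normSq_pos.2 (sub_ne_zero.2 (Ne.symm hw1))
  have hw2 : normSq w ≤ 1 := by rw [← Complex.sq_norm]; nlinarith [norm_nonneg w]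
  rw [div_re, ← add_div, le_div_iff₀ hN]
  simp only [normSq_apply, sub_re, sub_im, one_re, one_im] at hN hw2 ⊢
  nlinarith

lemma norm_div_one_add_le_one {p : ℂ} (hp : -(1 / 2) ≤ p.re) : ‖p / (1 + p)‖ ≤ 1 := by
  rw [norm_div]
  refine div_le_one_of_le₀ ?_ (norm_nonneg _)
  rw [← sq_le_sq₀ (norm_nonneg p) (norm_nonneg (1 + p)), Complex.sq_norm, Complex.sq_norm]
  simp only [normSq_apply, add_re, add_im, one_re, one_im]
  nlinarith

lemma one_add_ne_zero_of_neg_half_le_re {p : ℂ} (hp : -(1 / 2) ≤ p.re) : 1 + p ≠ 0 := fun h => by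
  have := congrArg re h
  simp only [add_re, one_re, zero_re] at this
  linarith

section psiTransform

variable {μ : Measure ℂ} (hμ : ∀ᵐ ζ ∂μ, ‖ζ‖ ≤ 1)
include hμ

lemma integrable_mul_div_one_sub_mul [IsFiniteMeasure μ] {z : ℂ} (hz : ‖z‖ < 1) :
    Integrable (fun ζ => z * ζ / (1 - z * ζ)) μ :=
  Integrable.mono' (integrable_const (‖z‖ / (1 - ‖z‖)))
    (by fun_prop : Measurable _).aestronglyMeasurable (hμ.mono fun _ hζ => norm_mul_div_one_sub_mul_le hz hζ)

lemma hasDerivAt_psiTransform [IsFiniteMeasure μ] {z₀ : ℂ} (hz₀ : ‖z₀‖ < 1) :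
    HasDerivAt (psiTransform μ) (∫ ζ, ζ / (1 - z₀ * ζ) ^ 2 ∂μ) z₀ := by
  set r := (1 + ‖z₀‖) / 2
  have hr : r < 1 := by simp only [r]; linarith
  have hball : ball (0 : ℂ) r ∈ nhds z₀ := isOpen_ball.mem_nhds (by simp [r]; linarith)
  refine (hasDerivAt_integral_of_dominated_loc_of_deriv_le
    (F := fun z ζ => z * ζ / (1 - z * ζ)) (F' := fun z ζ => ζ / (1 - z * ζ) ^ 2)
    (bound := fun _ => 1 / (1 - r) ^ 2) hball
    (.of_forall fun _ => (by fun_prop : Measurable _).aestronglyMeasurable)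
    (integrable_mul_div_one_sub_mul hμ hz₀) (by fun_prop : Measurable _).aestronglyMeasurable
    ?_ (integrable_const _) ?_).2
  · filter_upwards [hμ] with ζ hζ z hz
    exact norm_div_one_sub_mul_sq_le (mem_ball_zero_iff.1 hz).le hr hζ
  · filter_upwards [hμ] with ζ hζ z hz
    refine hasDerivAt_mul_div_one_sub_mul fun h => ?_
    have := one_sub_norm_le_norm_one_sub_mul (z := z) hζ
    rw [h, norm_zero] at this
    linarith [mem_ball_zero_iff.1 hz]

lemma differentiableOn_psiTransform [IsFiniteMeasure μ] :
    DifferentiableOn ℂ (psiTransform μ) (ball 0 1) := fun _ hz =>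
  (hasDerivAt_psiTransform hμ (mem_ball_zero_iff.1 hz)).differentiableAt.differentiableWithinAt

lemma neg_half_le_re_psiTransform [IsProbabilityMeasure μ] {z : ℂ} (hz : ‖z‖ < 1) :
    -(1 / 2) ≤ (psiTransform μ z).re := by
  have hint := integrable_mul_div_one_sub_mul hμ hz
  rw [psiTransform, ← RCLike.re_to_complex, ← integral_re hint]
  calc -(1 / 2) = ∫ _, -(1 / 2 : ℝ) ∂μ := by simp
    _ ≤ _ := integral_mono_ae (integrable_const _) hint.re <| hμ.mono fun ζ hζ =>
      neg_half_le_re_div_one_sub ((norm_mul_le z ζ).trans (mul_le_one₀ hz.le (norm_nonneg ζ) hζ))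

end psiTransform

/-- For a probability measure `μ` on the unit circle, `η_μ = ψ_μ/(1+ψ_μ)` is
analytic on the open unit disk and satisfies `|η_μ(z)| ≤ |z|`. -/
theorem stmt6 (μ : Measure ℂ) [IsProbabilityMeasure μ]
    (hsupp : μ {ζ : ℂ | ‖ζ‖ = 1}ᶜ = 0)
    (ψ η : ℂ → ℂ)
    (hψ : ∀ z, ψ z = ∫ ζ : ℂ, (z * ζ) / (1 - z * ζ) ∂μ)
    (hη : ∀ z, η z = ψ z / (1 + ψ z)) :
    AnalyticOnNhd ℂ η (Metric.ball (0 : ℂ) 1) ∧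
      ∀ z ∈ Metric.ball (0 : ℂ) 1, ‖η z‖ ≤ ‖z‖ := by
  have hμ : ∀ᵐ ζ ∂μ, ‖ζ‖ ≤ 1 := (ae_iff.2 hsupp).mono fun _ h => h.le
  have hre : ∀ z ∈ ball (0 : ℂ) 1, -(1 / 2) ≤ (ψ z).re := fun z hz => by
    rw [hψ]; exact neg_half_le_re_psiTransform hμ (mem_ball_zero_iff.1 hz)
  have hψd : DifferentiableOn ℂ ψ (ball 0 1) := by
    rw [show ψ = psiTransform μ from funext hψ]; exact differentiableOn_psiTransform hμ
  have hηd : DifferentiableOn ℂ η (ball 0 1) := by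
    rw [show η = fun z => ψ z / (1 + ψ z) from funext hη]
    exact hψd.div (hψd.const_add 1) fun z hz => one_add_ne_zero_of_neg_half_le_re (hre z hz)
  refine ⟨hηd.analyticOnNhd isOpen_ball, fun z hz => ?_⟩
  refine norm_le_norm_of_mapsTo_ball hηd (fun w hw => ?_) (by simp [hη, hψ]) (mem_ball_zero_iff.1 hz)
  rw [mem_closedBall_zero_iff, hη]
  exact norm_div_one_add_le_one (hre w hw)
end

section
/- Let B: ℂ⁺ → ℂ be analytic with Im B(z) ≥ 0 on the upper half-plane ℂ⁺, such that B extends analytically to ℂ ∖ [ε, ∞) for some ε > 0, is real on (−∞, ε), and B(0) = 0. Write B in Nevanlinna form B(z) = β + γz + ∫(1+zt)/(t−z) dρ(t) with β ∈ ℝ, γ ≥ 0, ρ a finite positive Borel measure. Then supp(ρ) ⊆ [ε, ∞), β = −∫ (1/t) dρ(t), and C(z) := zB(z) satisfies C(z) = z²(γ + ∫₀^∞ (t²+1)/(t(t−z)) dρ(t)); consequently C(z)/z² has positive imaginary part for z ∈ ℂ⁺ and positive real part for z in the left half-plane iℂ⁺. -/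
/-!
Near a point `x₀ < ε` the function `B` is analytic and real on the real axis, so
`Im B(x + iy) = O(y)` uniformly for `x` near `x₀`. On the other hand the kernel
`Im ((1 + zt)/(t - z)) = y (1 + t²)/|t - z|²` is at least `1/(2y)` on `[x - y, x + y]`, so
`ρ [x - y, x + y] ≤ 2y Im B(x + iy) = O(y²)`. Cutting an interval into `N` pieces gives
`ρ(I) = O(1/N)`, hence `ρ` vanishes on `(-∞, ε)`. The Nevanlinna integral is then holomorphic
off `[ε, ∞)` and agrees with `B` there by the identity theorem. Evaluating at `0` gives `β`,
and `z (1 + zt)/(t - z) - z/t = z² (t² + 1)/(t (t - z))` gives the formula for `zB(z)`; its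
kernel `((t² + 1)/t) (t - z)⁻¹` has nonnegative imaginary part for `Im z ≥ 0` and nonnegative
real part for `Re z ≤ 0 < t`.
-/

open MeasureTheory Complex Set Filter Topology

noncomputable def nevanlinnaKernel (z : ℂ) (t : ℝ) : ℂ := (1 + z * t) / (t - z)

lemma measurable_nevanlinnaKernel (z : ℂ) : Measurable (nevanlinnaKernel z) := by
  unfold nevanlinnaKernel; fun_prop

lemma nevanlinnaKernel_eq_add_div (z : ℂ) {t : ℝ} (h : (t : ℂ) - z ≠ 0) :
    nevanlinnaKernel z t = z + (1 + z ^ 2) / (t - z) := by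
  rw [nevanlinnaKernel]
  field_simp
  ring

lemma norm_nevanlinnaKernel_le {z : ℂ} {t d : ℝ} (hd : 0 < d) (h : d ≤ ‖(t : ℂ) - z‖) :
    ‖nevanlinnaKernel z t‖ ≤ ‖z‖ + ‖1 + z ^ 2‖ / d := by
  rw [nevanlinnaKernel_eq_add_div z (norm_pos_iff.1 (hd.trans_le h))]
  refine (norm_add_le _ _).trans ?_
  rw [norm_div]
  gcongr

lemma integrable_nevanlinnaKernel {ρ : Measure ℝ} [IsFiniteMeasure ρ] {z : ℂ} {d : ℝ}
    (hd : 0 < d) (h : ∀ᵐ t : ℝ ∂ρ, d ≤ ‖(t : ℂ) - z‖) : Integrable (nevanlinnaKernel z) ρ :=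
  (integrable_const _).mono' (measurable_nevanlinnaKernel z).aestronglyMeasurable
    (h.mono fun _ ht => norm_nevanlinnaKernel_le hd ht)

lemma nevanlinnaKernel_im (z : ℂ) (t : ℝ) :
    (nevanlinnaKernel z t).im = z.im * (1 + t ^ 2) / normSq (t - z) := by
  simp only [nevanlinnaKernel, div_im, add_im, add_re, mul_im, mul_re, sub_re, sub_im,
    ofReal_re, ofReal_im, one_re, one_im]
  ring

lemma measure_Icc_le_of_nevanlinna (ρ : Measure ℝ) [IsFiniteMeasure ρ] (β : ℝ) {γ : ℝ}
    (hγ : 0 ≤ γ) (x : ℝ) {y : ℝ} (hy : 0 < y) :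
    ρ (Icc (x - y) (x + y)) ≤ ENNReal.ofReal (2 * y *
      ((β : ℂ) + γ * (x + y * I) + ∫ t, nevanlinnaKernel (x + y * I) t ∂ρ).im) := by
  set z : ℂ := x + y * I
  have hint : Integrable (nevanlinnaKernel z) ρ := by
    refine integrable_nevanlinnaKernel hy (ae_of_all _ fun t => ?_)
    simpa [z, abs_of_pos hy] using abs_im_le_norm ((t : ℂ) - z)
  have him : ∀ t : ℝ, (nevanlinnaKernel z t).im = y * (1 + t ^ 2) / ((t - x) ^ 2 + y ^ 2) := by
    intro t
    rw [nevanlinnaKernel_im, normSq_apply]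
    simp only [z, sub_re, sub_im, add_re, add_im, ofReal_re, ofReal_im, mul_re, mul_im, I_re, I_im]
    ring_nf
  have hlow : ∀ t ∈ Icc (x - y) (x + y), 1 / (2 * y) ≤ (nevanlinnaKernel z t).im := by
    intro t ht
    have : (t - x) ^ 2 ≤ y ^ 2 := sq_le_sq' (by linarith [ht.1]) (by linarith [ht.2])
    rw [him, div_le_div_iff₀ (by positivity) (by positivity)]
    nlinarith [sq_nonneg t]
  have hpos : 0 ≤ᵐ[ρ] fun t => (nevanlinnaKernel z t).im :=
    ae_of_all _ fun t => show 0 ≤ (nevanlinnaKernel z t).im by rw [him]; positivity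
  have htransform : ((β : ℂ) + γ * z + ∫ t, nevanlinnaKernel z t ∂ρ).im
      = γ * y + ∫ t, (nevanlinnaKernel z t).im ∂ρ := by
    have him_integral := integral_im hint
    simp only [RCLike.im_to_complex] at him_integral
    simp [z, him_integral]
  rw [← ENNReal.ofReal_toReal (measure_ne_top ρ _)]
  apply ENNReal.ofReal_le_ofReal
  calc (ρ (Icc (x - y) (x + y))).toReal
      = 2 * y * (1 / (2 * y) * ρ.real (Icc (x - y) (x + y))) := by
        rw [Measure.real]; field_simp
    _ ≤ 2 * y * ∫ t in Icc (x - y) (x + y), (nevanlinnaKernel z t).im ∂ρ := by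
        gcongr
        exact setIntegral_ge_of_const_le_real measurableSet_Icc (measure_ne_top _ _) hlow
          hint.im.integrableOn
    _ ≤ 2 * y * ∫ t, (nevanlinnaKernel z t).im ∂ρ :=
        mul_le_mul_of_nonneg_left (setIntegral_le_integral hint.im hpos) (by positivity)
    _ ≤ 2 * y * ((β : ℂ) + γ * z + ∫ t, nevanlinnaKernel z t ∂ρ).im := by
        rw [htransform]
        gcongr
        exact le_add_of_nonneg_left (mul_nonneg hγ hy.le)

lemma exists_im_le_mul_of_analyticOnNhd {f : ℂ → ℂ} {s : Set ℂ} {a b : ℝ}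
    (hf : AnalyticOnNhd ℂ f s) (hs : Icc a b ×ℂ Icc 0 1 ⊆ s)
    (hreal : ∀ x ∈ Icc a b, (f x).im = 0) :
    ∃ C, ∀ x ∈ Icc a b, ∀ y ∈ Icc (0 : ℝ) 1, (f (x + y * I)).im ≤ C * y := by
  set K := Icc a b ×ℂ Icc (0 : ℝ) 1
  obtain ⟨C, hC⟩ := (isCompact_Icc.reProdIm isCompact_Icc).exists_bound_of_continuousOn
    (hf.deriv.continuousOn.mono hs)
  have hK : Convex ℝ K := by
    simpa [K, convexHull_reProdIm, (convex_Icc _ _).convexHull_eq] using convex_convexHull ℝ K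
  refine ⟨C, fun x hx y hy => ?_⟩
  have hxK : (x : ℂ) ∈ K := by simp [K, mem_reProdIm, hx]
  have hzK : (x + y * I : ℂ) ∈ K := by simp [K, mem_reProdIm, hx, hy]
  calc (f (x + y * I)).im = (f (x + y * I) - f x).im := by simp [hreal x hx]
    _ ≤ ‖f (x + y * I) - f x‖ := (le_abs_self _).trans (abs_im_le_norm _)
    _ ≤ C * ‖(x + y * I : ℂ) - x‖ := hK.norm_image_sub_le_of_norm_deriv_le
        (fun w hw => (hf w (hs hw)).differentiableAt) hC hxK hzK
    _ = C * y := by simp [abs_of_nonneg hy.1]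

lemma measure_Icc_eq_zero_of_le_sq (μ : Measure ℝ) {a b K : ℝ} (hab : a < b)
    (hK : ∀ x y, a ≤ x → x < y → y ≤ b → μ (Icc x y) ≤ ENNReal.ofReal (K * (y - x) ^ 2)) :
    μ (Icc a b) = 0 := by
  have hbound : ∀ N : ℕ, 1 ≤ N → μ (Icc a b) ≤ ENNReal.ofReal (K * (b - a) ^ 2 / N) := by
    intro N hN
    set h := (b - a) / N
    have hNpos : (0 : ℝ) < N := by exact_mod_cast hN
    have hh : 0 < h := div_pos (by linarith) hNpos
    have hNh : N * h = b - a := mul_div_cancel₀ _ hNpos.ne'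
    have hpieces : ∀ n : ℕ, 1 ≤ n → n ≤ N →
        μ (Icc a (a + n * h)) ≤ n * ENNReal.ofReal (K * h ^ 2) := by
      intro n hn
      induction n, hn using Nat.le_induction with
      | base =>
        intro h1N
        have h1N' : (1 : ℝ) * h ≤ N * h := by gcongr; exact_mod_cast h1N
        simpa using hK a (a + h) le_rfl (by linarith) (by linarith)
      | succ n hn ih =>
        intro hnN
        have hnN' : ((n : ℝ) + 1) * h ≤ N * h := by gcongr; exact_mod_cast hnN
        have hn0 : 0 ≤ (n : ℝ) * h := by positivity
        have hsplit : Icc a (a + (n + 1 : ℕ) * h) =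
            Icc a (a + n * h) ∪ Icc (a + n * h) (a + n * h + h) := by
          rw [Icc_union_Icc_eq_Icc (by linarith) (by linarith)]
          push_cast; ring_nf
        calc μ (Icc a (a + (n + 1 : ℕ) * h))
            ≤ μ (Icc a (a + n * h)) + μ (Icc (a + n * h) (a + n * h + h)) :=
              hsplit ▸ measure_union_le _ _
          _ ≤ n * ENNReal.ofReal (K * h ^ 2) + ENNReal.ofReal (K * h ^ 2) := by
              gcongr
              · exact ih (by omega)
              · simpa using hK (a + n * h) (a + n * h + h) (by linarith) (by linarith) (by linarith)
          _ = (n + 1 : ℕ) * ENNReal.ofReal (K * h ^ 2) := by push_cast; ring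
    calc μ (Icc a b) = μ (Icc a (a + N * h)) := by rw [hNh, add_sub_cancel]
      _ ≤ N * ENNReal.ofReal (K * h ^ 2) := hpieces N hN le_rfl
      _ = ENNReal.ofReal (K * (b - a) ^ 2 / N) := by
          rw [← ENNReal.ofReal_natCast, ← ENNReal.ofReal_mul hNpos.le, ← hNh]
          congr 1
          field_simp
  have hlim : Tendsto (fun N : ℕ => ENNReal.ofReal (K * (b - a) ^ 2 / N)) atTop (𝓝 0) := by
    simpa using ENNReal.tendsto_ofReal (tendsto_const_div_atTop_nhds_zero_nat (K * (b - a) ^ 2))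
  exact nonpos_iff_eq_zero.1 (ge_of_tendsto hlim (eventually_atTop.2 ⟨1, hbound⟩))

lemma measure_Iio_eq_zero_of_nevanlinna {ε β γ : ℝ} {B : ℂ → ℂ} {ρ : Measure ℝ}
    [IsFiniteMeasure ρ] (hB : AnalyticOnNhd ℂ B {z : ℂ | z.im ≠ 0 ∨ z.re < ε})
    (hreal : ∀ x : ℝ, x < ε → (B x).im = 0) (hγ : 0 ≤ γ)
    (hrep : ∀ z : ℂ, 0 < z.im → B z = β + γ * z + ∫ t, nevanlinnaKernel z t ∂ρ) :
    ρ (Iio ε) = 0 := by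
  refine measure_null_of_locally_null _ fun x₀ (hx₀ : x₀ < ε) => ?_
  -- `η ≤ 1` keeps the half-length of every subinterval within the height of the rectangle.
  set η := min 1 ((ε - x₀) / 2)
  have hη : 0 < η := lt_min one_pos (by linarith)
  have hηε : x₀ + η < ε := by linarith [min_le_right 1 ((ε - x₀) / 2)]
  refine ⟨Icc (x₀ - η) (x₀ + η),
    mem_nhdsWithin_of_mem_nhds (Icc_mem_nhds (by linarith) (by linarith)), ?_⟩
  have hrect : Icc (x₀ - η) (x₀ + η) ×ℂ Icc 0 1 ⊆ {z : ℂ | z.im ≠ 0 ∨ z.re < ε} := by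
    rintro z ⟨hre, -⟩
    exact or_iff_not_imp_left.2 fun _ => hre.2.trans_lt hηε
  obtain ⟨C, hC⟩ := exists_im_le_mul_of_analyticOnNhd hB hrect
    fun x hx => hreal x (hx.2.trans_lt hηε)
  refine measure_Icc_eq_zero_of_le_sq ρ (K := C / 2) (by linarith) fun x y hx hxy hy => ?_
  set m := (x + y) / 2
  set r := (y - x) / 2
  have hr : 0 < r := by simp only [r]; linarith
  have hm : m ∈ Icc (x₀ - η) (x₀ + η) := ⟨by simp only [m]; linarith, by simp only [m]; linarith⟩
  have hr1 : r ∈ Icc (0 : ℝ) 1 :=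
    ⟨hr.le, by simp only [r]; linarith [hx, hy, min_le_left 1 ((ε - x₀) / 2)]⟩
  have hIcc : Icc (m - r) (m + r) = Icc x y := by congr 1 <;> ring
  calc ρ (Icc x y) ≤ ENNReal.ofReal (2 * r * (B (m + r * I)).im) := by
        rw [← hIcc, hrep _ (by simpa using hr)]
        exact measure_Icc_le_of_nevanlinna ρ β hγ m hr
    _ ≤ ENNReal.ofReal (C / 2 * (y - x) ^ 2) := by
        refine ENNReal.ofReal_le_ofReal ?_
        calc 2 * r * (B (m + r * I)).im ≤ 2 * r * (C * r) := by gcongr; exact hC m hm r hr1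
          _ = C / 2 * (y - x) ^ 2 := by ring

lemma setOf_im_ne_zero_or_re_lt_eq_preimage_slitPlane (ε : ℝ) :
    {z : ℂ | z.im ≠ 0 ∨ z.re < ε} = (fun z => (ε : ℂ) - z) ⁻¹' slitPlane := by
  ext z
  simp [mem_slitPlane_iff, or_comm]

lemma isOpen_setOf_im_ne_zero_or_re_lt (ε : ℝ) : IsOpen {z : ℂ | z.im ≠ 0 ∨ z.re < ε} := by
  rw [setOf_im_ne_zero_or_re_lt_eq_preimage_slitPlane]
  exact isOpen_slitPlane.preimage (by fun_prop)

lemma isPreconnected_setOf_im_ne_zero_or_re_lt (ε : ℝ) :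
    IsPreconnected {z : ℂ | z.im ≠ 0 ∨ z.re < ε} := by
  have hinv : Function.Involutive fun z : ℂ => (ε : ℂ) - z := sub_sub_cancel _
  rw [setOf_im_ne_zero_or_re_lt_eq_preimage_slitPlane, ← hinv.image_eq_preimage_symm]
  exact (starConvex_one_slitPlane.isPathConnected one_mem_slitPlane).isConnected.isPreconnected
    |>.image _ (by fun_prop)

lemma exists_pos_le_norm_ofReal_sub {ε : ℝ} {z : ℂ} (hz : z.im ≠ 0 ∨ z.re < ε) :
    ∃ r > 0, ∀ t : ℝ, ε ≤ t → r ≤ ‖(t : ℂ) - z‖ := by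
  obtain ⟨r, hr, hball⟩ := Metric.isOpen_iff.1 (isOpen_setOf_im_ne_zero_or_re_lt ε) z hz
  refine ⟨r, hr, fun t ht => not_lt.1 fun hlt => ?_⟩
  have := hball (show (t : ℂ) ∈ Metric.ball z r by rwa [Metric.mem_ball, dist_eq])
  simp only [mem_ofPred_eq, ofReal_im, ofReal_re] at this
  exact this.elim (· rfl) ht.not_gt

lemma hasDerivAt_nevanlinnaKernel {z : ℂ} {t : ℝ} (h : (t : ℂ) - z ≠ 0) :
    HasDerivAt (fun w => nevanlinnaKernel w t) ((1 + (t : ℂ) ^ 2) / (t - z) ^ 2) z := by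
  have hnum : HasDerivAt (fun w : ℂ => 1 + w * t) t z := by
    simpa using ((hasDerivAt_id z).mul_const (t : ℂ)).const_add 1
  have hden : HasDerivAt (fun w : ℂ => (t : ℂ) - w) (-1) z := by
    simpa using (hasDerivAt_id z).const_sub (t : ℂ)
  refine (hnum.div hden h).congr_deriv ?_
  ring

lemma norm_deriv_nevanlinnaKernel_le {z : ℂ} {t d R : ℝ} (hd : 0 < d)
    (h : d ≤ ‖(t : ℂ) - z‖) (hz : ‖z‖ ≤ R) :
    ‖(1 + (t : ℂ) ^ 2) / (t - z) ^ 2‖ ≤ 1 + 2 * R / d + (1 + R ^ 2) / d ^ 2 := by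
  have hne : (t : ℂ) - z ≠ 0 := norm_pos_iff.1 (hd.trans_le h)
  have hsplit : (1 + (t : ℂ) ^ 2) / (t - z) ^ 2 =
      1 + 2 * z / (t - z) + (1 + z ^ 2) / (t - z) ^ 2 := by
    field_simp
    ring
  have hR : 0 ≤ R := (norm_nonneg z).trans hz
  calc ‖(1 + (t : ℂ) ^ 2) / (t - z) ^ 2‖
      ≤ ‖(1 : ℂ)‖ + ‖2 * z / (t - z)‖ + ‖(1 + z ^ 2) / (t - z) ^ 2‖ := by
        rw [hsplit]; exact norm_add₃_le
    _ ≤ 1 + 2 * R / d + (1 + R ^ 2) / d ^ 2 := by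
        rw [norm_one, norm_div, norm_div, norm_mul, norm_pow, Complex.norm_two]
        gcongr
        · exact (norm_add_le _ _).trans (by rw [norm_one, norm_pow]; gcongr)

lemma differentiableAt_integral_nevanlinnaKernel {ρ : Measure ℝ} [IsFiniteMeasure ρ] {z₀ : ℂ}
    {r : ℝ} (hr : 0 < r) (h : ∀ᵐ t : ℝ ∂ρ, r ≤ ‖(t : ℂ) - z₀‖) :
    DifferentiableAt ℂ (fun z => ∫ t, nevanlinnaKernel z t ∂ρ) z₀ := by
  have hr2 : 0 < r / 2 := half_pos hr
  have hball : ∀ᵐ t : ℝ ∂ρ, ∀ z ∈ Metric.ball z₀ (r / 2), r / 2 ≤ ‖(t : ℂ) - z‖ :=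
    h.mono fun t ht z hz => by
      rw [Metric.mem_ball, dist_eq] at hz
      linarith [norm_sub_le_norm_sub_add_norm_sub (t : ℂ) z z₀]
  have hnorm : ∀ z ∈ Metric.ball z₀ (r / 2), ‖z‖ ≤ ‖z₀‖ + r / 2 := fun z hz => by
    rw [Metric.mem_ball, dist_eq] at hz
    linarith [norm_le_norm_add_norm_sub' z z₀]
  refine (hasDerivAt_integral_of_dominated_loc_of_deriv_le
    (F' := fun z t => (1 + (t : ℂ) ^ 2) / (t - z) ^ 2)
    (Metric.ball_mem_nhds z₀ hr2)
    (Eventually.of_forall fun z => (measurable_nevanlinnaKernel z).aestronglyMeasurable)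
    (integrable_nevanlinnaKernel hr2 (hball.mono fun t ht => ht z₀ (Metric.mem_ball_self hr2)))
    (by fun_prop : Measurable fun t : ℝ => (1 + (t : ℂ) ^ 2) / (t - z₀) ^ 2).aestronglyMeasurable
    (hball.mono fun t ht z hz => norm_deriv_nevanlinnaKernel_le hr2 (ht z hz) (hnorm z hz))
    (integrable_const _)
    (hball.mono fun t ht z hz =>
      hasDerivAt_nevanlinnaKernel (norm_pos_iff.1 (hr2.trans_le (ht z hz))))).2.differentiableAt

lemma eqOn_nevanlinna {ε β γ : ℝ} {B : ℂ → ℂ} {ρ : Measure ℝ} [IsFiniteMeasure ρ]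
    (hB : AnalyticOnNhd ℂ B {z : ℂ | z.im ≠ 0 ∨ z.re < ε})
    (hrep : ∀ z : ℂ, 0 < z.im → B z = β + γ * z + ∫ t, nevanlinnaKernel z t ∂ρ)
    (hsupp : ∀ᵐ t ∂ρ, ε ≤ t) :
    EqOn B (fun z => β + γ * z + ∫ t, nevanlinnaKernel z t ∂ρ)
      {z : ℂ | z.im ≠ 0 ∨ z.re < ε} := by
  have hΩ := isOpen_setOf_im_ne_zero_or_re_lt ε
  have hG : AnalyticOnNhd ℂ (fun z : ℂ => β + γ * z + ∫ t, nevanlinnaKernel z t ∂ρ)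
      {z : ℂ | z.im ≠ 0 ∨ z.re < ε} := by
    refine DifferentiableOn.analyticOnNhd (fun z hz => ?_) hΩ
    obtain ⟨r, hr, hdist⟩ := exists_pos_le_norm_ofReal_sub hz
    have hint := differentiableAt_integral_nevanlinnaKernel hr (hsupp.mono hdist)
    exact ((differentiableAt_const _).add ((differentiableAt_const _).mul differentiableAt_id)
      |>.add hint).differentiableWithinAt
  refine hB.eqOn_of_preconnected_of_eventuallyEq hG (isPreconnected_setOf_im_ne_zero_or_re_lt ε)
    (z₀ := I) (by simp) ?_
  filter_upwards [(isOpen_lt continuous_const continuous_im).mem_nhds (by simp : (0 : ℝ) < I.im)]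
    with z hz using hrep z hz

lemma integrable_one_div_of_ae_le {ρ : Measure ℝ} [IsFiniteMeasure ρ] {ε : ℝ} (hε : 0 < ε)
    (h : ∀ᵐ t ∂ρ, ε ≤ t) : Integrable (fun t : ℝ => 1 / t) ρ :=
  (integrable_const (1 / ε)).mono' (measurable_const.div measurable_id).aestronglyMeasurable
    (h.mono fun t ht => by
      rw [Real.norm_of_nonneg (one_div_pos.2 (hε.trans_le ht)).le]
      exact one_div_le_one_div_of_le hε ht)

lemma nevanlinnaKernel_zero (t : ℝ) : nevanlinnaKernel 0 t = ((1 / t : ℝ) : ℂ) := by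
  simp [nevanlinnaKernel]

noncomputable def stieltjesKernel (z : ℂ) (t : ℝ) : ℂ := ((t : ℂ) ^ 2 + 1) / (t * (t - z))

lemma stieltjesKernel_eq_div {z : ℂ} {t : ℝ} (hz : z ≠ 0) (ht : t ≠ 0) (htz : (t : ℂ) - z ≠ 0) :
    stieltjesKernel z t = (nevanlinnaKernel z t - (1 / t : ℝ)) / z := by
  have ht' : (t : ℂ) ≠ 0 := ofReal_ne_zero.2 ht
  simp only [stieltjesKernel, nevanlinnaKernel]
  push_cast
  field_simp
  ring

lemma integrable_stieltjesKernel_and_integral_eq {ρ : Measure ℝ} [IsFiniteMeasure ρ] {ε : ℝ}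
    (hε : 0 < ε) (hsupp : ∀ᵐ t ∂ρ, ε ≤ t) {z : ℂ} (hz : z ≠ 0) (hzε : z.im ≠ 0 ∨ z.re < ε) :
    Integrable (stieltjesKernel z) ρ ∧ ∫ t, stieltjesKernel z t ∂ρ =
      (∫ t, nevanlinnaKernel z t ∂ρ - ((∫ t, 1 / t ∂ρ : ℝ) : ℂ)) / z := by
  obtain ⟨r, hr, hdist⟩ := exists_pos_le_norm_ofReal_sub hzε
  have hK := integrable_nevanlinnaKernel hr (hsupp.mono hdist)
  have hinv : Integrable (fun t : ℝ => ((1 / t : ℝ) : ℂ)) ρ :=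
    (integrable_one_div_of_ae_le hε hsupp).ofReal
  have heq : (fun t => (nevanlinnaKernel z t - ((1 / t : ℝ) : ℂ)) / z) =ᵐ[ρ] stieltjesKernel z :=
    hsupp.mono fun t ht => (stieltjesKernel_eq_div hz (hε.trans_le ht).ne'
      (norm_pos_iff.1 (hr.trans_le (hdist t ht)))).symm
  refine ⟨((hK.sub hinv).div_const z).congr heq, ?_⟩
  rw [← integral_congr_ae heq, integral_div, integral_sub hK hinv, integral_complex_ofReal]

lemma mul_nevanlinna_eq_sq_mul_stieltjes {ρ : Measure ℝ} [IsFiniteMeasure ρ] {ε β : ℝ}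
    (γ : ℝ) (hε : 0 < ε) (hsupp : ∀ᵐ t ∂ρ, ε ≤ t) (hβ : β = -∫ t, 1 / t ∂ρ) {z : ℂ}
    (hz : z ≠ 0) (hzε : z.im ≠ 0 ∨ z.re < ε) :
    z * (β + γ * z + ∫ t, nevanlinnaKernel z t ∂ρ) =
      z ^ 2 * (γ + ∫ t, stieltjesKernel z t ∂ρ) := by
  rw [(integrable_stieltjesKernel_and_integral_eq hε hsupp hz hzε).2, hβ]
  push_cast
  field_simp
  ring

lemma stieltjesKernel_eq_ofReal_mul_inv (z : ℂ) {t : ℝ} (ht : t ≠ 0) :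
    stieltjesKernel z t = ((t ^ 2 + 1) / t : ℝ) * ((t : ℂ) - z)⁻¹ := by
  have ht' : (t : ℂ) ≠ 0 := ofReal_ne_zero.2 ht
  simp only [stieltjesKernel]
  push_cast
  field_simp

lemma stieltjesKernel_im_nonneg {z : ℂ} {t : ℝ} (ht : 0 < t) (hz : 0 ≤ z.im) :
    0 ≤ (stieltjesKernel z t).im := by
  rw [stieltjesKernel_eq_ofReal_mul_inv z ht.ne', im_ofReal_mul, inv_im, sub_im, ofReal_im,
    zero_sub, neg_neg]
  exact mul_nonneg (by positivity) (div_nonneg hz (normSq_nonneg _))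

lemma stieltjesKernel_re_nonneg {z : ℂ} {t : ℝ} (ht : 0 < t) (hz : z.re ≤ t) :
    0 ≤ (stieltjesKernel z t).re := by
  rw [stieltjesKernel_eq_ofReal_mul_inv z ht.ne', re_ofReal_mul, inv_re, sub_re, ofReal_re]
  exact mul_nonneg (by positivity) (div_nonneg (sub_nonneg.2 hz) (normSq_nonneg _))

lemma im_integral_stieltjesKernel_nonneg {ρ : Measure ℝ} {z : ℂ}
    (hH : Integrable (stieltjesKernel z) ρ) (hpos : ∀ᵐ t ∂ρ, 0 < t) (hz : 0 ≤ z.im) :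
    0 ≤ (∫ t, stieltjesKernel z t ∂ρ).im := by
  rw [← RCLike.im_to_complex, ← integral_im hH]
  exact integral_nonneg_of_ae (hpos.mono fun t ht => stieltjesKernel_im_nonneg ht hz)

lemma re_integral_stieltjesKernel_nonneg {ρ : Measure ℝ} {z : ℂ}
    (hH : Integrable (stieltjesKernel z) ρ) (hpos : ∀ᵐ t ∂ρ, 0 < t) (hz : z.re ≤ 0) :
    0 ≤ (∫ t, stieltjesKernel z t ∂ρ).re := by
  rw [← RCLike.re_to_complex, ← integral_re hH]
  exact integral_nonneg_of_ae (hpos.mono fun t ht => stieltjesKernel_re_nonneg ht (hz.trans ht.le))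

theorem stmt15_general (ε : ℝ) (hε : 0 < ε) (B : ℂ → ℂ)
    (hB : AnalyticOnNhd ℂ B {z : ℂ | z.im ≠ 0 ∨ z.re < ε})
    (hreal : ∀ x : ℝ, x < ε → (B (x : ℂ)).im = 0)
    (hB0 : B 0 = 0)
    (β γ : ℝ) (hγ : 0 ≤ γ) (ρ : Measure ℝ) [IsFiniteMeasure ρ]
    (hrep : ∀ z : ℂ, 0 < z.im →
      B z = (β : ℂ) + (γ : ℂ) * z + ∫ t : ℝ, (1 + z * (t : ℂ)) / ((t : ℂ) - z) ∂ρ) :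
    ρ (Set.Iio ε) = 0 ∧
      Integrable (fun t : ℝ => 1 / t) ρ ∧
      β = -∫ t : ℝ, 1 / t ∂ρ ∧
      (∀ z : ℂ, z.im ≠ 0 ∨ z.re < 0 →
        z * B z = z ^ 2 * ((γ : ℂ) +
          ∫ t : ℝ, ((t : ℂ) ^ 2 + 1) / ((t : ℂ) * ((t : ℂ) - z)) ∂ρ)) ∧
      (∀ z : ℂ, 0 < z.im → 0 ≤ ((z * B z) / z ^ 2).im) ∧
      (∀ z : ℂ, z.re < 0 → 0 ≤ ((z * B z) / z ^ 2).re) := by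
  have hrep' : ∀ z : ℂ, 0 < z.im → B z = β + γ * z + ∫ t, nevanlinnaKernel z t ∂ρ := hrep
  have hsupp := measure_Iio_eq_zero_of_nevanlinna hB hreal hγ hrep'
  have hae : ∀ᵐ t ∂ρ, ε ≤ t := mem_ae_iff.2 (by rwa [← compl_Ici] at hsupp)
  have hpos : ∀ᵐ t ∂ρ, 0 < t := hae.mono fun _ => hε.trans_le
  have hBG := eqOn_nevanlinna hB hrep' hae
  have hβ : β = -∫ t, 1 / t ∂ρ := by
    have h0 := hBG (Or.inr hε : (0 : ℂ).im ≠ 0 ∨ (0 : ℂ).re < ε)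
    simp only [hB0, nevanlinnaKernel_zero, integral_complex_ofReal, mul_zero, add_zero] at h0
    exact_mod_cast eq_neg_of_add_eq_zero_left h0.symm
  have hC : ∀ z : ℂ, z.im ≠ 0 ∨ z.re < 0 → z ≠ 0 ∧ Integrable (stieltjesKernel z) ρ ∧
      z * B z = z ^ 2 * (γ + ∫ t, stieltjesKernel z t ∂ρ) := fun z hz => by
    have hz0 : z ≠ 0 := by rintro rfl; simp at hz
    have hzε : z.im ≠ 0 ∨ z.re < ε := hz.imp_right (·.trans hε)
    rw [hBG hzε]
    exact ⟨hz0, (integrable_stieltjesKernel_and_integral_eq hε hae hz0 hzε).1,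
      mul_nevanlinna_eq_sq_mul_stieltjes γ hε hae hβ hz0 hzε⟩
  refine ⟨hsupp, integrable_one_div_of_ae_le hε hae, hβ, fun z hz => (hC z hz).2.2,
    fun z hz => ?_, fun z hz => ?_⟩
  · obtain ⟨hz0, hH, hCz⟩ := hC z (Or.inl hz.ne')
    rw [hCz, mul_div_cancel_left₀ _ (pow_ne_zero 2 hz0), add_im, ofReal_im, zero_add]
    exact im_integral_stieltjesKernel_nonneg hH hpos hz.le
  · obtain ⟨hz0, hH, hCz⟩ := hC z (Or.inr hz)
    rw [hCz, mul_div_cancel_left₀ _ (pow_ne_zero 2 hz0), add_re, ofReal_re]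
    exact add_nonneg hγ (re_integral_stieltjesKernel_nonneg hH hpos hz.le)

/-- Nevanlinna analysis in the proof of Theorem 3.6: if `B` is a Pick function,
analytic across `ℂ ∖ [ε,∞)`, real on `(-∞, ε)`, with `B(0) = 0` and Nevanlinna
representation `B(z) = β + γz + ∫ (1+zt)/(t-z) dρ(t)`, then `ρ` is supported in
`[ε,∞)`, `β = -∫ (1/t) dρ(t)`, `C(z) = zB(z)` equals
`z²(γ + ∫ (t²+1)/(t(t-z)) dρ(t))`, and `C(z)/z²` has nonnegative imaginary
part on `ℂ⁺` and nonnegative real part on the left half-plane. -/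
theorem stmt15 (ε : ℝ) (hε : 0 < ε) (B : ℂ → ℂ)
    (hB : AnalyticOnNhd ℂ B {z : ℂ | z.im ≠ 0 ∨ z.re < ε})
    (hPick : ∀ z : ℂ, 0 < z.im → 0 ≤ (B z).im)
    (hreal : ∀ x : ℝ, x < ε → (B (x : ℂ)).im = 0)
    (hB0 : B 0 = 0)
    (β γ : ℝ) (hγ : 0 ≤ γ) (ρ : Measure ℝ) [IsFiniteMeasure ρ]
    (hrep : ∀ z : ℂ, 0 < z.im →
      B z = (β : ℂ) + (γ : ℂ) * z + ∫ t : ℝ, (1 + z * (t : ℂ)) / ((t : ℂ) - z) ∂ρ) :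
    ρ (Set.Iio ε) = 0 ∧
      Integrable (fun t : ℝ => 1 / t) ρ ∧
      β = -∫ t : ℝ, 1 / t ∂ρ ∧
      (∀ z : ℂ, z.im ≠ 0 ∨ z.re < 0 →
        z * B z = z ^ 2 * ((γ : ℂ) +
          ∫ t : ℝ, ((t : ℂ) ^ 2 + 1) / ((t : ℂ) * ((t : ℂ) - z)) ∂ρ)) ∧
      (∀ z : ℂ, 0 < z.im → 0 ≤ ((z * B z) / z ^ 2).im) ∧
      (∀ z : ℂ, z.re < 0 → 0 ≤ ((z * B z) / z ^ 2).re) :=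
  stmt15_general ε hε B hB hreal hB0 β γ hγ ρ hrep
end

section
/- Let η₁, η₂ be analytic functions on 𝔻 with ηⱼ(0) = 0, |ηⱼ(z)| ≤ |z|, ηⱼ'(0) ≠ 0, ηⱼ'(0) > 0 real, and suppose η₁ ∘ η₁ = η₂ ∘ η₂ on 𝔻 and η₁'(0) = η₂'(0). Then η₁ = η₂. (Uniqueness of square roots with respect to composition: convolution square roots with equal nonzero first moment coincide.) -/
/-!
The `n`-th coefficient of `p.comp p` is a sum over the compositions of `n`. For `n ≥ 2` only the
compositions `single n` and `ones n` involve the coefficient `pₙ`, together contributing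
`(p₁ + p₁ ^ n) pₙ`; every other composition involves only coefficients of index `< n`. So when
`p₁ + p₁ ^ n ≠ 0` for all `n ≥ 2` (e.g. `p₁ > 0`), a compositional square root is determined,
coefficient by coefficient, by its square and by `p₀, p₁`. The identity theorem then spreads the
equality of germs at `0` over the disk.
-/

open Filter Topology

namespace FormalMultilinearSeries

variable {𝕜 E : Type*} [NontriviallyNormedField 𝕜] [NormedAddCommGroup E] [NormedSpace 𝕜 E]

theorem ext_coeff {p q : FormalMultilinearSeries 𝕜 𝕜 E} (h : ∀ n, p.coeff n = q.coeff n) :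
    p = q :=
  funext fun n => by rw [← mkPiRing_coeff_eq p n, ← mkPiRing_coeff_eq q n, h n]

theorem coeff_comp (q : FormalMultilinearSeries 𝕜 𝕜 E) (p : FormalMultilinearSeries 𝕜 𝕜 𝕜)
    (n : ℕ) :
    (q.comp p).coeff n =
      ∑ c : Composition n, (∏ i, p.coeff (c.blocksFun i)) • q.coeff c.length := by
  change (∑ c : Composition n, q.compAlongComposition p c) (fun _ => 1) = _
  rw [_root_.sum_apply]
  refine Finset.sum_congr rfl fun c _ => ?_
  rw [compAlongComposition_apply, ← apply_eq_prod_smul_coeff]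
  rfl

theorem coeff_comp_self_sub_coeff_comp_self {p q : FormalMultilinearSeries 𝕜 𝕜 𝕜} {n : ℕ}
    (hn : 2 ≤ n) (h : ∀ k < n, p.coeff k = q.coeff k) :
    (p.comp p).coeff n - (q.comp q).coeff n =
      (p.coeff 1 + p.coeff 1 ^ n) * (p.coeff n - q.coeff n) := by
  have hn0 : 0 < n := by omega
  set summand : FormalMultilinearSeries 𝕜 𝕜 𝕜 → Composition n → 𝕜 :=
    fun r c => (∏ i, r.coeff (c.blocksFun i)) * r.coeff c.length
  have hsingle : ∀ r, summand r (.single n hn0) = r.coeff 1 * r.coeff n := fun r => by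
    simp only [summand]
    rw [Finset.prod_congr rfl fun i _ => congrArg r.coeff (Composition.single_blocksFun hn0 i),
      Finset.prod_const, Finset.card_univ, Fintype.card_fin, Composition.single_length, pow_one,
      mul_comm]
  have hones : ∀ r, summand r (.ones n) = r.coeff 1 ^ n * r.coeff n := fun r => by
    simp [summand, Composition.ones_blocksFun]
  have hother : ∀ c ∉ ({.single n hn0, .ones n} : Finset (Composition n)),
      summand p c = summand q c := by
    intro c hc
    simp only [Finset.mem_insert, Finset.mem_singleton, not_or] at hc
    have hlen : c.length < n := lt_of_not_ge (mt Composition.eq_ones_iff_le_length.2 hc.2)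
    have hblocks := (Composition.ne_single_iff hn0).1 hc.1
    simp only [summand, h _ hlen, fun i => h _ (hblocks i)]
  have hne : (Composition.single n hn0) ≠ .ones n := fun heq => by
    have := congrArg Composition.length heq
    simp only [Composition.single_length, Composition.ones_length] at this
    omega
  have hsplit : ∀ r, (r.comp r).coeff n =
      summand r (.single n hn0) + summand r (.ones n) +
        ∑ c ∈ ({.single n hn0, .ones n} : Finset (Composition n))ᶜ, summand r c := fun r => by
    rw [coeff_comp, ← Finset.sum_pair hne, Finset.sum_add_sum_compl]
    rfl
  rw [hsplit, hsplit, Finset.sum_congr rfl fun c hc => hother c (Finset.mem_compl.1 hc),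
    hsingle, hsingle, hones, hones, h 1 (by omega)]
  ring

theorem eq_of_comp_self_eq {p q : FormalMultilinearSeries 𝕜 𝕜 𝕜}
    (h₀ : p.coeff 0 = q.coeff 0) (h₁ : p.coeff 1 = q.coeff 1)
    (hp₁ : ∀ n, 2 ≤ n → p.coeff 1 + p.coeff 1 ^ n ≠ 0) (h : p.comp p = q.comp q) : p = q := by
  refine ext_coeff fun n => ?_
  induction n using Nat.strong_induction_on with
  | _ n ih =>
    match n with
    | 0 => exact h₀
    | 1 => exact h₁
    | n + 2 =>
      have hsub := coeff_comp_self_sub_coeff_comp_self (by omega) ih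
      rw [h, sub_self, zero_eq_mul] at hsub
      exact sub_eq_zero.1 (hsub.resolve_left (hp₁ _ (by omega)))

end FormalMultilinearSeries

theorem AnalyticAt.eventuallyEq_of_comp_self_eventuallyEq {𝕜 : Type*}
    [NontriviallyNormedField 𝕜] {f g : 𝕜 → 𝕜} {x : 𝕜}
    (hf : AnalyticAt 𝕜 f x) (hg : AnalyticAt 𝕜 g x) (hfx : f x = x) (hgx : g x = x)
    (hd : deriv f x = deriv g x) (hd_add_pow : ∀ n, 2 ≤ n → deriv f x + deriv f x ^ n ≠ 0)
    (h : f ∘ f =ᶠ[𝓝 x] g ∘ g) : f =ᶠ[𝓝 x] g := by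
  obtain ⟨p, hp⟩ := hf
  obtain ⟨q, hq⟩ := hg
  have hpp : HasFPowerSeriesAt (f ∘ f) (p.comp p) x := (hfx ▸ hp).comp hp
  have hqq : HasFPowerSeriesAt (g ∘ g) (q.comp q) x := (hgx ▸ hq).comp hq
  have hp₀ : p.coeff 0 = x := (hp.coeff_zero _).trans hfx
  have hq₀ : q.coeff 0 = x := (hq.coeff_zero _).trans hgx
  rw [hp.deriv, hq.deriv] at hd
  rw [hp.deriv] at hd_add_pow
  have hpq : p = q :=
    FormalMultilinearSeries.eq_of_comp_self_eq (hp₀.trans hq₀.symm) hd hd_add_pow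
      (hpp.eq_formalMultilinearSeries (hqq.congr h.symm))
  have hsub := hp.sub hq
  rw [hpq, sub_self] at hsub
  exact hsub.eventually_eq_zero.mono fun z hz => sub_eq_zero.1 hz

open Complex

theorem stmt16_general (η₁ η₂ : ℂ → ℂ)
    (h₁ : AnalyticOnNhd ℂ η₁ (Metric.ball (0 : ℂ) 1))
    (h₂ : AnalyticOnNhd ℂ η₂ (Metric.ball (0 : ℂ) 1))
    (h₁0 : η₁ 0 = 0) (h₂0 : η₂ 0 = 0)
    (hd₁ : 0 < (deriv η₁ 0).re) (hd₁i : (deriv η₁ 0).im = 0)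
    (hd : deriv η₁ 0 = deriv η₂ 0)
    (hsq : ∀ z ∈ Metric.ball (0 : ℂ) 1, η₁ (η₁ z) = η₂ (η₂ z)) :
    ∀ z ∈ Metric.ball (0 : ℂ) 1, η₁ z = η₂ z := by
  have h0 : (0 : ℂ) ∈ Metric.ball (0 : ℂ) 1 := Metric.mem_ball_self one_pos
  have hd_add_pow : ∀ n, 2 ≤ n → deriv η₁ 0 + deriv η₁ 0 ^ n ≠ 0 := fun n _ => by
    rw [← re_add_im (deriv η₁ 0), hd₁i, ofReal_zero, zero_mul, add_zero, ← ofReal_pow,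
      ← ofReal_add, ofReal_ne_zero]
    positivity
  have hsq' : η₁ ∘ η₁ =ᶠ[𝓝 0] η₂ ∘ η₂ :=
    eventually_of_mem (Metric.isOpen_ball.mem_nhds h0) hsq
  exact h₁.eqOn_of_preconnected_of_eventuallyEq h₂ (convex_ball 0 1).isPreconnected h0
    ((h₁ 0 h0).eventuallyEq_of_comp_self_eventuallyEq (h₂ 0 h0) h₁0 h₂0 hd hd_add_pow hsq')

/-- Uniqueness of compositional square roots (Proposition 4.5): two analytic
self-maps of the disk fixing `0`, with `|ηⱼ(z)| ≤ |z|`, equal positive real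
derivative at `0`, and equal compositional squares, coincide. -/
theorem stmt16 (η₁ η₂ : ℂ → ℂ)
    (h₁ : AnalyticOnNhd ℂ η₁ (Metric.ball (0 : ℂ) 1))
    (h₂ : AnalyticOnNhd ℂ η₂ (Metric.ball (0 : ℂ) 1))
    (h₁0 : η₁ 0 = 0) (h₂0 : η₂ 0 = 0)
    (hb₁ : ∀ z ∈ Metric.ball (0 : ℂ) 1, ‖η₁ z‖ ≤ ‖z‖)
    (hb₂ : ∀ z ∈ Metric.ball (0 : ℂ) 1, ‖η₂ z‖ ≤ ‖z‖)
    (hd₁ : 0 < (deriv η₁ 0).re) (hd₁i : (deriv η₁ 0).im = 0)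
    (hd : deriv η₁ 0 = deriv η₂ 0)
    (hsq : ∀ z ∈ Metric.ball (0 : ℂ) 1, η₁ (η₁ z) = η₂ (η₂ z)) :
    ∀ z ∈ Metric.ball (0 : ℂ) 1, η₁ z = η₂ z :=
  stmt16_general η₁ η₂ h₁ h₂ h₁0 h₂0 hd₁ hd₁i hd hsq
end

section
/- Let a > 0, γ ≥ 0, and ρ a finite positive Borel measure on [0,∞). Define A(z) = z(z+a)(γ + ∫₀^∞ (t²+1)/((t+a)(t−z)) dρ(t)) for z ∈ ℂ ∖ ℝ₊. Then Im(A(z)/(z+a)²) = Im z · (γa/|z+a|² + ∫₀^∞ ((t²+1)/(t+a)) · (ta+|z|²)/(|t−z|²|z+a|²) dρ(t)) ≥ 0 for Im z > 0; in particular A(z)/(z+a)² lies in the closed upper half-plane for z in the upper half-plane. -/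
/-!
Dividing by `(z + a)²` gives `A z / (z + a)² = γ z/(z+a) + ∫ (t²+1)/(t+a) · z/((z+a)(t-z)) dρ`,
a combination with real coefficients, nonnegative on `supp ρ ⊆ [0, ∞)`. Multiplying by the
conjugate denominators, `Im (z / ((z+a)(t-z))) = Im (z (z̄+a)(t-z̄)) / (|z+a|² |t-z|²)`, and the
imaginary part of the numerator is `Im z · (t a + |z|²)`. The integrand is bounded on `[0, ∞)`,
which lets the imaginary part pass under the integral.
-/

open MeasureTheory Complex

lemma im_div_eq_div_normSq (z w : ℂ) : (z / w).im = (z.im * w.re - z.re * w.im) / normSq w := by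
  rw [div_im, sub_div]

lemma im_div_add_ofReal (z : ℂ) (a : ℝ) : (z / (z + a)).im = a * z.im / ‖z + a‖ ^ 2 := by
  rw [im_div_eq_div_normSq, Complex.sq_norm]
  congr 1
  simp only [add_re, add_im, ofReal_re, ofReal_im]
  ring

lemma im_div_add_ofReal_mul_ofReal_sub (z : ℂ) (a t : ℝ) :
    (z / ((z + a) * (t - z))).im =
      z.im * (t * a + ‖z‖ ^ 2) / (‖(t : ℂ) - z‖ ^ 2 * ‖z + a‖ ^ 2) := by
  rw [im_div_eq_div_normSq, Complex.sq_norm, Complex.sq_norm, Complex.sq_norm, normSq_mul,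
    mul_comm (normSq _)]
  congr 1
  simp only [mul_re, mul_im, add_re, add_im, sub_re, sub_im, ofReal_re, ofReal_im, normSq_apply]
  ring

lemma norm_sq_add_one_div_le {a t : ℝ} {z : ℂ} (ha : 0 < a) (ht : 0 ≤ t) (hz : 0 < z.im) :
    ‖((t : ℂ) ^ 2 + 1) / ((t + a) * (t - z))‖ ≤ 1 + (|z.re| + a⁻¹) / z.im := by
  have h_im : z.im ≤ ‖(t : ℂ) - z‖ := by
    simpa [abs_of_pos hz] using abs_im_le_norm ((t : ℂ) - z)
  have h_re : |t - z.re| ≤ ‖(t : ℂ) - z‖ := by simpa using abs_re_le_norm ((t : ℂ) - z)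
  have h_far : t + a⁻¹ ≤ (1 + (|z.re| + a⁻¹) / z.im) * ‖(t : ℂ) - z‖ := by
    have : |z.re| + a⁻¹ ≤ (|z.re| + a⁻¹) / z.im * ‖(t : ℂ) - z‖ := by
      rw [div_mul_eq_mul_div, le_div_iff₀ hz]
      gcongr
    linarith [le_abs_self (t - z.re), le_abs_self z.re]
  have h_num : t ^ 2 + 1 ≤ (t + a) * (t + a⁻¹) := by
    nlinarith [mul_inv_cancel₀ ha.ne', inv_pos.2 ha]
  have h_dist : 0 < ‖(t : ℂ) - z‖ := hz.trans_le h_im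
  rw [norm_div, norm_mul, show (t : ℂ) ^ 2 + 1 = ((t ^ 2 + 1 : ℝ) : ℂ) by push_cast; rfl,
    show (t : ℂ) + a = ((t + a : ℝ) : ℂ) by push_cast; rfl, norm_real, norm_real,
    Real.norm_of_nonneg (by positivity), Real.norm_of_nonneg (by positivity),
    div_le_iff₀ (by positivity)]
  calc t ^ 2 + 1 ≤ (t + a) * (t + a⁻¹) := h_num
    _ ≤ (t + a) * ((1 + (|z.re| + a⁻¹) / z.im) * ‖(t : ℂ) - z‖) := by gcongr
    _ = _ := by ring

lemma ae_nonneg_of_measure_Iio_eq_zero {ρ : Measure ℝ} (hρ : ρ (Set.Iio 0) = 0) :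
    ∀ᵐ t ∂ρ, 0 ≤ t :=
  ae_iff.2 (by simp only [not_le]; exact hρ)

lemma integrable_sq_add_one_div {a : ℝ} {z : ℂ} (ha : 0 < a) (hz : 0 < z.im)
    {ρ : Measure ℝ} [IsFiniteMeasure ρ] (hρ : ρ (Set.Iio 0) = 0) :
    Integrable (fun t : ℝ ↦ ((t : ℂ) ^ 2 + 1) / ((t + a) * (t - z))) ρ :=
  (integrable_const _).mono' (by fun_prop : Measurable _).aestronglyMeasurable
    ((ae_nonneg_of_measure_Iio_eq_zero hρ).mono fun _ ht ↦ norm_sq_add_one_div_le ha ht hz)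

lemma im_sq_add_one_div_mul_div (z : ℂ) (a t : ℝ) :
    (((t : ℂ) ^ 2 + 1) / ((t + a) * (t - z)) * (z / (z + a))).im =
      z.im * ((t ^ 2 + 1) / (t + a) * ((t * a + ‖z‖ ^ 2) / (‖(t : ℂ) - z‖ ^ 2 * ‖z + a‖ ^ 2))) := by
  have : ((t : ℂ) ^ 2 + 1) / ((t + a) * (t - z)) * (z / (z + a)) =
      (((t ^ 2 + 1) / (t + a) : ℝ) : ℂ) * (z / ((z + a) * (t - z))) := by
    push_cast
    simp only [div_eq_mul_inv, mul_inv]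
    ring
  rw [this, im_ofReal_mul, im_div_add_ofReal_mul_ofReal_sub]
  ring

/-- The computation in the proof of Theorem 3.8 (case `B(-a) = 0`): for
`A(z) = z(z+a)(γ + ∫ (t²+1)/((t+a)(t-z)) dρ(t))`, the imaginary part of
`A(z)/(z+a)²` equals the displayed nonnegative expression for `Im z > 0`. -/
theorem stmt17 (a γ : ℝ) (ha : 0 < a) (hγ : 0 ≤ γ)
    (ρ : Measure ℝ) [IsFiniteMeasure ρ] (hρ : ρ (Set.Iio 0) = 0)
    (A : ℂ → ℂ)
    (hA : ∀ z : ℂ, A z = z * (z + (a : ℂ)) * ((γ : ℂ) +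
      ∫ t : ℝ, ((t : ℂ) ^ 2 + 1) / (((t : ℂ) + a) * ((t : ℂ) - z)) ∂ρ)) :
    ∀ z : ℂ, 0 < z.im →
      (A z / (z + (a : ℂ)) ^ 2).im =
        z.im * (γ * a / ‖z + (a : ℂ)‖ ^ 2 +
          ∫ t : ℝ, ((t ^ 2 + 1) / (t + a)) *
            ((t * a + ‖z‖ ^ 2) /
              (‖(t : ℂ) - z‖ ^ 2 * ‖z + (a : ℂ)‖ ^ 2)) ∂ρ) ∧
      0 ≤ (A z / (z + (a : ℂ)) ^ 2).im := by
  intro z hz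
  have hza : z + a ≠ 0 := fun h ↦ hz.ne' (by simpa using congrArg im h)
  have hrepr : A z / (z + a) ^ 2 = γ * (z / (z + a)) +
      ∫ t : ℝ, ((t : ℂ) ^ 2 + 1) / ((t + a) * (t - z)) * (z / (z + a)) ∂ρ := by
    rw [hA, integral_mul_const]
    field_simp
  have him : (A z / (z + a) ^ 2).im = z.im * (γ * a / ‖z + (a : ℂ)‖ ^ 2 +
      ∫ t : ℝ, ((t ^ 2 + 1) / (t + a)) *
        ((t * a + ‖z‖ ^ 2) / (‖(t : ℂ) - z‖ ^ 2 * ‖z + (a : ℂ)‖ ^ 2)) ∂ρ) := by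
    have him_integral :
        (∫ t : ℝ, ((t : ℂ) ^ 2 + 1) / ((t + a) * (t - z)) * (z / (z + a)) ∂ρ).im =
        ∫ t : ℝ, (((t : ℂ) ^ 2 + 1) / ((t + a) * (t - z)) * (z / (z + a))).im ∂ρ :=
      (integral_im ((integrable_sq_add_one_div ha hz hρ).mul_const _)).symm
    rw [hrepr, add_im, im_ofReal_mul, im_div_add_ofReal, him_integral]
    simp only [im_sq_add_one_div_mul_div, integral_const_mul]
    ring
  refine ⟨him, him ▸ mul_nonneg hz.le (add_nonneg (by positivity) ?_)⟩
  refine integral_nonneg_of_ae ((ae_nonneg_of_measure_Iio_eq_zero hρ).mono fun t ht ↦ ?_)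
  have : 0 < t + a := by positivity
  positivity
end
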